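/- arXiv:2409.11137 — 11 statements merged into one kernel-verified Lean document; each statement's English description precedes it below -/
import Mathlib

section
/- If y : (0,a) → ℝ is twice differentiable with y' > 0 on (0,a) and satisfies the ODE (y'/r)^{n-1} · y'' = e^y with n = 2, and y(r) → +∞ and y'(r) → +∞ as r → a⁻, then y''(r) → +∞ as r → a⁻. -/
/-!
Multiplying the ODE by `r` gives `y' y'' = r eʸ`, so the energy `E = eʸ - y'²` has derivative
`eʸ (y' - 2r)`, which is nonnegative once `y' ≥ 2a`. Hence `eʸ ≥ y'² + K` near `a` for a
constant `K`, and `y'' = r eʸ / y' ≥ r (y' + K / y') → +∞`.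
-/

open Real Set Filter Topology

section CalabiODE

variable {y y' y'' : ℝ → ℝ}

theorem mul_deriv_eq_mul_exp_of_calabi {r : ℝ} (hr : r ≠ 0)
    (hode : (y' r / r) * y'' r = exp (y r)) : y' r * y'' r = r * exp (y r) := by
  rw [← hode]
  field_simp

theorem hasDerivAt_exp_sub_sq {r : ℝ} (hy' : HasDerivAt y (y' r) r)
    (hy'' : HasDerivAt y' (y'' r) r) :
    HasDerivAt (fun t => exp (y t) - y' t ^ 2) (exp (y r) * y' r - 2 * y' r * y'' r) r :=
  (hy'.exp.fun_sub (hy''.fun_pow 2)).congr_deriv (by ring)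

theorem monotoneOn_exp_sub_sq {s : Set ℝ} (hs : Convex ℝ s)
    (hy' : ∀ r ∈ s, HasDerivAt y (y' r) r) (hy'' : ∀ r ∈ s, HasDerivAt y' (y'' r) r)
    (hode : ∀ r ∈ s, y' r * y'' r = r * exp (y r)) (hlarge : ∀ r ∈ s, 2 * r ≤ y' r) :
    MonotoneOn (fun t => exp (y t) - y' t ^ 2) s := by
  have hderiv r (hr : r ∈ s) := hasDerivAt_exp_sub_sq (hy' r hr) (hy'' r hr)
  refine monotoneOn_of_hasDerivWithinAt_nonneg hs
    (fun r hr => (hderiv r hr).continuousAt.continuousWithinAt)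
    (fun r hr => (hderiv r (interior_subset hr)).hasDerivWithinAt) fun r hr => ?_
  have hr := interior_subset hr
  calc (0 : ℝ) ≤ exp (y r) * (y' r - 2 * r) :=
        mul_nonneg (exp_pos _).le (sub_nonneg.mpr (hlarge r hr))
    _ = exp (y r) * y' r - 2 * y' r * y'' r := by rw [mul_assoc 2, hode r hr]; ring

end CalabiODE

theorem mul_add_div_le_of_mul_eq_mul_exp {r Y v w K : ℝ} (hr : 0 ≤ r) (hv : 0 < v)
    (hode : v * w = r * exp Y) (hK : K ≤ exp Y - v ^ 2) : r * (v + K / v) ≤ w := by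
  have hw : w = r * exp Y / v := by rw [← hode]; field_simp
  rw [hw, le_div_iff₀ hv]
  calc r * (v + K / v) * v = r * (v ^ 2 + K) := by field_simp
    _ ≤ r * exp Y := by gcongr; linarith

theorem Filter.Tendsto.mul_add_div_atTop {α : Type*} {l : Filter α} {f g : α → ℝ} {c : ℝ}
    (K : ℝ) (hc : 0 < c) (hf : Tendsto f l (𝓝 c)) (hg : Tendsto g l atTop) :
    Tendsto (fun x => f x * (g x + K / g x)) l atTop :=
  hf.pos_mul_atTop hc (hg.atTop_add (tendsto_const_nhds.div_atTop hg))

theorem calabi_second_deriv_tendsto_atTop_general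
    (a : ℝ) (ha : 0 < a) (y y' y'' : ℝ → ℝ)
    (hy' : ∀ r ∈ Ioo (0:ℝ) a, HasDerivAt y (y' r) r)
    (hy'' : ∀ r ∈ Ioo (0:ℝ) a, HasDerivAt y' (y'' r) r)
    (hode : ∀ r ∈ Ioo (0:ℝ) a, (y' r / r) * y'' r = Real.exp (y r))
    (hy'_top : Tendsto y' (𝓝[<] a) atTop) :
    Tendsto y'' (𝓝[<] a) atTop := by
  obtain ⟨b, hba : b < a, hb⟩ : ∃ b ∈ Iio a, Ioo b a ⊆ Ioo 0 a ∩ {r | 2 * a ≤ y' r} :=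
    mem_nhdsLT_iff_exists_Ioo_subset.mp
      (inter_mem (Ioo_mem_nhdsLT ha) (hy'_top.eventually_ge_atTop (2 * a)))
  have hsub : Ioo b a ⊆ Ioo 0 a := fun r hr => (hb hr).1
  have hode' r (hr : r ∈ Ioo b a) : y' r * y'' r = r * exp (y r) :=
    mul_deriv_eq_mul_exp_of_calabi (hsub hr).1.ne' (hode r (hsub hr))
  have hlarge r (hr : r ∈ Ioo b a) : 2 * r ≤ y' r := by
    have : 2 * a ≤ y' r := (hb hr).2
    linarith [hr.2]
  have hmono := monotoneOn_exp_sub_sq (convex_Ioo b a) (fun r hr => hy' r (hsub hr))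
    (fun r hr => hy'' r (hsub hr)) hode' hlarge
  obtain ⟨m, hm⟩ := nonempty_Ioo.mpr hba
  have hbound : ∀ᶠ r in 𝓝[<] a,
      r * (y' r + (exp (y m) - y' m ^ 2) / y' r) ≤ y'' r := by
    filter_upwards [Ioo_mem_nhdsLT hm.2] with r hr
    have hrb : r ∈ Ioo b a := ⟨hm.1.trans hr.1, hr.2⟩
    have hr0 : 0 < r := (hsub hrb).1
    exact mul_add_div_le_of_mul_eq_mul_exp hr0.le (by linarith [hlarge r hrb])
      (hode' r hrb) (hmono hm hrb hr.1.le)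
  exact tendsto_atTop_mono' _ hbound <|
    (tendsto_nhdsWithin_of_tendsto_nhds tendsto_id).mul_add_div_atTop _ ha hy'_top

/-- If `y` solves the n = 2 Calabi ODE `(y'/r) * y'' = e^y` on `(0,a)` with `y' > 0`,
and `y, y' → +∞` as `r → a⁻`, then `y'' → +∞` as `r → a⁻`. -/
theorem calabi_second_deriv_tendsto_atTop
    (a : ℝ) (ha : 0 < a) (y y' y'' : ℝ → ℝ)
    (hy' : ∀ r ∈ Ioo (0:ℝ) a, HasDerivAt y (y' r) r)
    (hy'' : ∀ r ∈ Ioo (0:ℝ) a, HasDerivAt y' (y'' r) r)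
    (hy'pos : ∀ r ∈ Ioo (0:ℝ) a, 0 < y' r)
    (hode : ∀ r ∈ Ioo (0:ℝ) a, (y' r / r) * y'' r = Real.exp (y r))
    (hy_top : Tendsto y (𝓝[<] a) atTop)
    (hy'_top : Tendsto y' (𝓝[<] a) atTop) :
    Tendsto y'' (𝓝[<] a) atTop :=
  calabi_second_deriv_tendsto_atTop_general a ha y y' y'' hy' hy'' hode hy'_top
end

section
/- If y : (0,a) → ℝ satisfies y''(r) = r·e^{y(r)}/y'(r) with y' > 0 on (0,a), and y(r) → +∞, y'(r) → +∞ as r → a⁻, then e^{y(r)}/y'(r)^3 → 1/(3a) as r → a⁻. -/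
/-!
Along a solution, `ψ = y'³/3 - r eʸ` satisfies `ψ' = -eʸ`. Since `y` increases, the mean value
inequality gives `|ψ r - ψ r₀| ≤ e^{y r} (r - r₀)`, so `ψ / eʸ → 0` as `eʸ → ∞`; that is,
`y'³ / (3 eʸ) - r → 0`, hence `eʸ / y'³ → 1 / (3a)`.
-/

open Real Set Filter Topology

theorem abs_sub_le_mul_of_abs_deriv_le_monotoneOn {ψ ψ' g : ℝ → ℝ} {s : Set ℝ} {r₀ r : ℝ}
    (hs : Icc r₀ r ⊆ s) (hψ : ∀ x ∈ s, HasDerivAt ψ (ψ' x) x) (hg : MonotoneOn g s)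
    (hψ' : ∀ x ∈ s, |ψ' x| ≤ g x) (hr : r₀ ≤ r) :
    |ψ r - ψ r₀| ≤ g r * (r - r₀) := by
  refine norm_image_sub_le_of_norm_deriv_le_segment'
    (fun x hx => (hψ x (hs hx)).hasDerivWithinAt) (fun x hx => ?_) r (right_mem_Icc.2 hr)
  have hx : x ∈ Icc r₀ r := Ico_subset_Icc_self hx
  exact (hψ' x (hs hx)).trans (hg (hs hx) (hs (right_mem_Icc.2 hr)) hx.2)

theorem tendsto_div_nhdsLT_zero_of_abs_deriv_le {ψ ψ' g : ℝ → ℝ} {a b : ℝ} (hba : b < a)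
    (hψ : ∀ r ∈ Ioo b a, HasDerivAt ψ (ψ' r) r) (hg : MonotoneOn g (Ioo b a))
    (hψ' : ∀ r ∈ Ioo b a, |ψ' r| ≤ g r) (hg_top : Tendsto g (𝓝[<] a) atTop) :
    Tendsto (fun r => ψ r / g r) (𝓝[<] a) (𝓝 0) := by
  rw [Metric.tendsto_nhds]
  intro ε hε
  obtain ⟨r₀, hr₀, hr₀a⟩ := exists_between (max_lt hba (by linarith : a - ε / 2 < a))
  obtain ⟨hbr₀, hεr₀⟩ := max_lt_iff.1 hr₀
  have hsmall : Tendsto (fun r => |ψ r₀| / g r) (𝓝[<] a) (𝓝 0) :=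
    tendsto_const_nhds.div_atTop hg_top
  filter_upwards [hsmall.eventually (gt_mem_nhds (half_pos hε)),
    hg_top.eventually_gt_atTop 0, Ioo_mem_nhdsLT hr₀a] with r hψr₀ hgr hr
  have hsub : Icc r₀ r ⊆ Ioo b a := Icc_subset_Ioo hbr₀ hr.2
  have hincr := abs_sub_le_mul_of_abs_deriv_le_monotoneOn hsub hψ hg hψ' hr.1.le
  rw [Real.dist_eq, sub_zero]
  calc |ψ r / g r| = |ψ r| / g r := by rw [abs_div, abs_of_pos hgr]
    _ ≤ (|ψ r₀| + g r * (r - r₀)) / g r := by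
        gcongr
        linarith [abs_sub_abs_le_abs_sub (ψ r) (ψ r₀)]
    _ = |ψ r₀| / g r + (r - r₀) := by field_simp
    _ < ε := by linarith [hr.2]

theorem hasDerivAt_cube_div_three_sub_mul_exp {y y' : ℝ → ℝ} {r y''r : ℝ}
    (hy : HasDerivAt y (y' r) r) (hy' : HasDerivAt y' y''r r) (hne : y' r ≠ 0)
    (hode : y''r = r * exp (y r) / y' r) :
    HasDerivAt (fun s => y' s ^ 3 / 3 - s * exp (y s)) (-exp (y r)) r := by
  refine (((hy'.pow 3).div_const 3).sub ((hasDerivAt_id' r).mul hy.exp)).congr_deriv ?_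
  rw [hode]
  field_simp
  ring

theorem calabi_exp_div_cube_limit_general
    (a : ℝ) (ha : 0 < a) (y y' y'' : ℝ → ℝ)
    (hy' : ∀ r ∈ Ioo (0:ℝ) a, HasDerivAt y (y' r) r)
    (hy'' : ∀ r ∈ Ioo (0:ℝ) a, HasDerivAt y' (y'' r) r)
    (hy'pos : ∀ r ∈ Ioo (0:ℝ) a, 0 < y' r)
    (hode : ∀ r ∈ Ioo (0:ℝ) a, y'' r = r * Real.exp (y r) / y' r)
    (hy_top : Tendsto y (𝓝[<] a) atTop)
 :
    Tendsto (fun r => Real.exp (y r) / (y' r) ^ 3) (𝓝[<] a) (𝓝 (1 / (3 * a))) := by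
  have hy_mono : MonotoneOn y (Ioo 0 a) :=
    (strictMonoOn_of_hasDerivWithinAt_pos (convex_Ioo 0 a)
      (fun r hr => (hy' r hr).continuousAt.continuousWithinAt)
      (fun r hr => (hy' r (interior_subset hr)).hasDerivWithinAt)
      (fun r hr => hy'pos r (interior_subset hr))).monotoneOn
  have hψ_div : Tendsto (fun r => (y' r ^ 3 / 3 - r * exp (y r)) / exp (y r)) (𝓝[<] a) (𝓝 0) :=
    tendsto_div_nhdsLT_zero_of_abs_deriv_le ha
      (fun r hr => hasDerivAt_cube_div_three_sub_mul_exp (hy' r hr) (hy'' r hr)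
        (hy'pos r hr).ne' (hode r hr))
      (Real.exp_monotone.comp_monotoneOn hy_mono) (fun r _ => by simp)
      (tendsto_exp_atTop.comp hy_top)
  have hratio : Tendsto (fun r => y' r ^ 3 / (3 * exp (y r))) (𝓝[<] a) (𝓝 a) := by
    refine (zero_add a ▸ hψ_div.add (tendsto_id.mono_left nhdsWithin_le_nhds)).congr fun r => ?_
    dsimp only [id]
    field_simp
    ring
  rw [one_div]
  refine ((hratio.const_mul 3).inv₀ (by positivity)).congr fun r => ?_
  rw [mul_div_assoc', mul_div_mul_left _ _ three_ne_zero, inv_div]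

theorem calabi_exp_div_cube_limit
    (a : ℝ) (ha : 0 < a) (y y' y'' : ℝ → ℝ)
    (hy' : ∀ r ∈ Ioo (0:ℝ) a, HasDerivAt y (y' r) r)
    (hy'' : ∀ r ∈ Ioo (0:ℝ) a, HasDerivAt y' (y'' r) r)
    (hy'pos : ∀ r ∈ Ioo (0:ℝ) a, 0 < y' r)
    (hode : ∀ r ∈ Ioo (0:ℝ) a, y'' r = r * Real.exp (y r) / y' r)
    (hy_top : Tendsto y (𝓝[<] a) atTop)
    (hy'_top : Tendsto y' (𝓝[<] a) atTop)
 :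
    Tendsto (fun r => Real.exp (y r) / (y' r) ^ 3) (𝓝[<] a) (𝓝 (1 / (3 * a))) :=
  calabi_exp_div_cube_limit_general a ha y y' y'' hy' hy'' hy'pos hode hy_top
end

section
/- Let y : (0,a) → ℝ satisfy y''(r) = r·e^{y(r)}/y'(r) with y' > 0, y → +∞ and y' → +∞ as r → a⁻, and suppose e^{y}/y'^3 → 1/(3a) as r → a⁻. Then the limit lim_{r→a⁻} (y'(r)³ − 3r·e^{y(r)}) is not a finite real number. -/
/-!
Along a solution, `d/dr (y'³ - 3r eʸ) = -3eʸ` and `d/dr (eʸ/y') = eʸ - r e²ʸ/y'³`, so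
`G = y'³ - 3r eʸ + eʸ/y'` is decreasing on `(0, a)` and hence bounded above near `a`.
The asymptotics `eʸ/y'³ → 1/(3a)` and `y' → ∞` force `eʸ/y' → ∞`, so a finite limit of
`y'³ - 3r eʸ` would make `G → ∞`.
-/

open Real Set Filter Topology

lemma AntitoneOn.not_tendsto_atTop_nhdsLT {β : Type*} [Preorder β] [NoMaxOrder β] {f : ℝ → β}
    {a b : ℝ} (hab : b < a) (hf : AntitoneOn f (Ioo b a)) : ¬ Tendsto f (𝓝[<] a) atTop := by
  intro htop
  obtain ⟨m, hm⟩ := nonempty_Ioo.2 hab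
  obtain ⟨r, hr_gt, hr_mem⟩ := ((htop.eventually_gt_atTop (f m)).and
    (Ioo_mem_nhdsLT hm.2)).exists
  exact (hf hm ⟨hm.1.trans hr_mem.1, hr_mem.2⟩ hr_mem.1.le).not_gt hr_gt

lemma Filter.Tendsto.div_atTop_of_div_pow_succ {α : Type*} {l : Filter α} {f g : α → ℝ}
    {c : ℝ} {n : ℕ} (hn : n ≠ 0) (hc : 0 < c)
    (hfg : Tendsto (fun x => f x / g x ^ (n + 1)) l (𝓝 c)) (hg : Tendsto g l atTop) :
    Tendsto (fun x => f x / g x) l atTop := by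
  refine (hfg.pos_mul_atTop hc ((tendsto_pow_atTop hn).comp hg)).congr' ?_
  filter_upwards [hg.eventually_gt_atTop 0] with x hx
  simp only [Function.comp_apply]
  field_simp
  ring

section CalabiODE

variable {y y' y'' : ℝ → ℝ} {r : ℝ}

lemma hasDerivAt_cube_sub_mul_exp (hy : HasDerivAt y (y' r) r) (hy' : HasDerivAt y' (y'' r) r)
    (hode : y'' r = r * exp (y r) / y' r) (hne : y' r ≠ 0) :
    HasDerivAt (fun s => y' s ^ 3 - 3 * s * exp (y s)) (-3 * exp (y r)) r := by
  refine ((hy'.pow 3).sub (((hasDerivAt_id r).const_mul 3).mul hy.exp)).congr_deriv ?_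
  rw [hode, id]
  field_simp
  ring

lemma hasDerivAt_exp_div (hy : HasDerivAt y (y' r) r) (hy' : HasDerivAt y' (y'' r) r)
    (hode : y'' r = r * exp (y r) / y' r) (hne : y' r ≠ 0) :
    HasDerivAt (fun s => exp (y s) / y' s) (exp (y r) - r * exp (y r) ^ 2 / y' r ^ 3) r := by
  refine (hy.exp.div hy' hne).congr_deriv ?_
  rw [hode]
  field_simp

lemma antitoneOn_cube_sub_mul_exp_add_exp_div {a : ℝ}
    (hy : ∀ r ∈ Ioo 0 a, HasDerivAt y (y' r) r) (hy' : ∀ r ∈ Ioo 0 a, HasDerivAt y' (y'' r) r)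
    (hy'pos : ∀ r ∈ Ioo 0 a, 0 < y' r)
    (hode : ∀ r ∈ Ioo 0 a, y'' r = r * exp (y r) / y' r) :
    AntitoneOn (fun r => y' r ^ 3 - 3 * r * exp (y r) + exp (y r) / y' r) (Ioo 0 a) := by
  have hderiv : ∀ r ∈ Ioo 0 a, HasDerivAt
      (fun r => y' r ^ 3 - 3 * r * exp (y r) + exp (y r) / y' r)
      (-3 * exp (y r) + (exp (y r) - r * exp (y r) ^ 2 / y' r ^ 3)) r := fun r hr =>
    (hasDerivAt_cube_sub_mul_exp (hy r hr) (hy' r hr) (hode r hr) (hy'pos r hr).ne').add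
      (hasDerivAt_exp_div (hy r hr) (hy' r hr) (hode r hr) (hy'pos r hr).ne')
  refine antitoneOn_of_hasDerivWithinAt_nonpos (convex_Ioo 0 a)
    (f' := fun r => -3 * exp (y r) + (exp (y r) - r * exp (y r) ^ 2 / y' r ^ 3))
    (fun r hr => (hderiv r hr).continuousAt.continuousWithinAt) (fun r hr => ?_) (fun r hr => ?_)
  · rw [interior_Ioo] at hr ⊢
    exact (hderiv r hr).hasDerivWithinAt
  · rw [interior_Ioo] at hr
    have := hy'pos r hr
    have : 0 ≤ r * exp (y r) ^ 2 / y' r ^ 3 := by have := hr.1; positivity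
    nlinarith [exp_pos (y r)]

end CalabiODE

theorem calabi_no_finite_limit_general
    (a : ℝ) (ha : 0 < a) (y y' y'' : ℝ → ℝ)
    (hy' : ∀ r ∈ Ioo (0:ℝ) a, HasDerivAt y (y' r) r)
    (hy'' : ∀ r ∈ Ioo (0:ℝ) a, HasDerivAt y' (y'' r) r)
    (hy'pos : ∀ r ∈ Ioo (0:ℝ) a, 0 < y' r)
    (hode : ∀ r ∈ Ioo (0:ℝ) a, y'' r = r * Real.exp (y r) / y' r)
    (hy'_top : Tendsto y' (𝓝[<] a) atTop)
    (hlim : Tendsto (fun r => Real.exp (y r) / (y' r) ^ 3) (𝓝[<] a) (𝓝 (1 / (3 * a)))) :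
    ¬ ∃ c : ℝ, Tendsto (fun r => (y' r) ^ 3 - 3 * r * Real.exp (y r)) (𝓝[<] a) (𝓝 c) := by
  rintro ⟨c, hc⟩
  have hexp_div : Tendsto (fun r => exp (y r) / y' r) (𝓝[<] a) atTop :=
    hlim.div_atTop_of_div_pow_succ two_ne_zero (by positivity) hy'_top
  exact (antitoneOn_cube_sub_mul_exp_add_exp_div hy' hy'' hy'pos hode).not_tendsto_atTop_nhdsLT ha
    (hc.add_atTop hexp_div)

theorem calabi_no_finite_limit
    (a : ℝ) (ha : 0 < a) (y y' y'' : ℝ → ℝ)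
    (hy' : ∀ r ∈ Ioo (0:ℝ) a, HasDerivAt y (y' r) r)
    (hy'' : ∀ r ∈ Ioo (0:ℝ) a, HasDerivAt y' (y'' r) r)
    (hy'pos : ∀ r ∈ Ioo (0:ℝ) a, 0 < y' r)
    (hode : ∀ r ∈ Ioo (0:ℝ) a, y'' r = r * Real.exp (y r) / y' r)
    (hy_top : Tendsto y (𝓝[<] a) atTop)
    (hy'_top : Tendsto y' (𝓝[<] a) atTop)
    (hlim : Tendsto (fun r => Real.exp (y r) / (y' r) ^ 3) (𝓝[<] a) (𝓝 (1 / (3 * a)))) :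
    ¬ ∃ c : ℝ, Tendsto (fun r => (y' r) ^ 3 - 3 * r * Real.exp (y r)) (𝓝[<] a) (𝓝 c) :=
  calabi_no_finite_limit_general a ha y y' y'' hy' hy'' hy'pos hode hy'_top hlim
end

section
/- Let y : (0,a) → ℝ satisfy y''(r) = r·e^{y(r)}/y'(r) with y' > 0, y → +∞, y' → +∞ as r → a⁻, and e^{y}/y'^3 → 1/(3a). Then (y'(r)³ − 3r·e^{y(r)})/y'(r)² → −3/(2a) as r → a⁻. -/
open Real Set Filter Topology

/-!
Along the Calabi equation `y' y'' = r eʸ` the cubic terms cancel: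
`(y'³ - 3 r eʸ)' = -3 eʸ` and `(y'²)' = 2 r eʸ`. The quotient of the derivatives is `-3 / (2r)`,
and since `y'² → ∞`, l'Hôpital's rule in the `∞/∞` form gives the limit `-3 / (2a)`.
-/

section LHopital

variable {a L : ℝ} {f g f' g' : ℝ → ℝ}

/-- With `L < M < M'`, the function `f - M g` decreases near `a`, so
`f / g ≤ M + (f - M g)(c) / g`, and the last term tends to `0`. -/
theorem HasDerivAt.eventually_div_lt_nhdsLT_of_tendsto_atTop {M' : ℝ}
    (hff' : ∀ᶠ x in 𝓝[<] a, HasDerivAt f (f' x) x)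
    (hgg' : ∀ᶠ x in 𝓝[<] a, HasDerivAt g (g' x) x) (hg' : ∀ᶠ x in 𝓝[<] a, 0 < g' x)
    (hg : Tendsto g (𝓝[<] a) atTop) (hdiv : Tendsto (fun x => f' x / g' x) (𝓝[<] a) (𝓝 L))
    (hL : L < M') : ∀ᶠ x in 𝓝[<] a, f x / g x < M' := by
  obtain ⟨M, hLM, hMM'⟩ := exists_between hL
  obtain ⟨c, hca, hc⟩ := (nhdsLT_basis a).eventually_iff.1
    (hff'.and (hgg'.and (hg'.and (hdiv.eventually (gt_mem_nhds hLM)))))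
  set h : ℝ → ℝ := fun x => f x - M * g x
  have hh : ∀ x ∈ Ioo c a, HasDerivAt h (f' x - M * g' x) x := fun x hx =>
    (hc hx).1.sub ((hc hx).2.1.const_mul M)
  have hh_anti : AntitoneOn h (Ioo c a) := by
    refine antitoneOn_of_hasDerivWithinAt_nonpos (f' := fun x => f' x - M * g' x)
      (convex_Ioo c a) (fun x hx => (hh x hx).continuousAt.continuousWithinAt) ?_ ?_ <;>
      rw [interior_Ioo]
    · exact fun x hx => (hh x hx).hasDerivWithinAt
    · intro x hx
      obtain ⟨-, -, hpos, hlt⟩ := hc hx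
      linarith [(div_lt_iff₀ hpos).1 hlt]
  obtain ⟨c', hcc', hc'a⟩ := exists_between hca
  have hsmall : ∀ᶠ x in 𝓝[<] a, h c' / g x < M' - M :=
    (tendsto_const_nhds.div_atTop hg).eventually (gt_mem_nhds (sub_pos.2 hMM'))
  filter_upwards [Ioo_mem_nhdsLT hc'a, hg.eventually_gt_atTop 0, hsmall] with x hx hgx hsmall
  have hle : h x ≤ h c' := hh_anti ⟨hcc', hc'a⟩ ⟨hcc'.trans hx.1, hx.2⟩ hx.1.le
  calc f x / g x = M + h x / g x := by field_simp; ring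
    _ ≤ M + h c' / g x := by gcongr
    _ < M' := by linarith

theorem HasDerivAt.lhopital_nhdsLT_of_tendsto_atTop
    (hff' : ∀ᶠ x in 𝓝[<] a, HasDerivAt f (f' x) x)
    (hgg' : ∀ᶠ x in 𝓝[<] a, HasDerivAt g (g' x) x) (hg' : ∀ᶠ x in 𝓝[<] a, 0 < g' x)
    (hg : Tendsto g (𝓝[<] a) atTop) (hdiv : Tendsto (fun x => f' x / g' x) (𝓝[<] a) (𝓝 L)) :
    Tendsto (fun x => f x / g x) (𝓝[<] a) (𝓝 L) := by
  have hdiv_neg : Tendsto (fun x => -f' x / g' x) (𝓝[<] a) (𝓝 (-L)) := by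
    simpa only [neg_div] using hdiv.neg
  refine tendsto_order.2 ⟨fun M' hM' => ?_, fun M' hM' =>
    HasDerivAt.eventually_div_lt_nhdsLT_of_tendsto_atTop hff' hgg' hg' hg hdiv hM'⟩
  have hneg := HasDerivAt.eventually_div_lt_nhdsLT_of_tendsto_atTop
    (hff'.mono fun x hx => hx.neg) hgg' hg' hg hdiv_neg (neg_lt_neg hM')
  filter_upwards [hneg] with x hx
  simpa only [Pi.neg_apply, neg_div, neg_lt_neg_iff] using hx

end LHopital

section CalabiODE

variable {y y' : ℝ → ℝ} {r q : ℝ}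

theorem hasDerivAt_pow_three_sub_three_mul_exp (hy : HasDerivAt y (y' r) r)
    (hy' : HasDerivAt y' q r) (hode : y' r * q = r * exp (y r)) :
    HasDerivAt (fun s => y' s ^ 3 - 3 * s * exp (y s)) (-3 * exp (y r)) r := by
  refine ((hy'.fun_pow 3).fun_sub
    (((hasDerivAt_id' r).const_mul 3).fun_mul hy.exp)).congr_deriv ?_
  push_cast
  linear_combination 3 * y' r * hode

theorem hasDerivAt_pow_two_of_mul_eq (hy' : HasDerivAt y' q r)
    (hode : y' r * q = r * exp (y r)) :
    HasDerivAt (fun s => y' s ^ 2) (2 * r * exp (y r)) r := by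
  refine (hy'.fun_pow 2).congr_deriv ?_
  push_cast
  linear_combination 2 * hode

end CalabiODE

theorem calabi_ratio_limit_general
    (a : ℝ) (ha : 0 < a) (y y' y'' : ℝ → ℝ)
    (hy' : ∀ r ∈ Ioo (0:ℝ) a, HasDerivAt y (y' r) r)
    (hy'' : ∀ r ∈ Ioo (0:ℝ) a, HasDerivAt y' (y'' r) r)
    (hode : ∀ r ∈ Ioo (0:ℝ) a, y'' r = r * Real.exp (y r) / y' r)
    (hy'_top : Tendsto y' (𝓝[<] a) atTop) :
    Tendsto (fun r => ((y' r) ^ 3 - 3 * r * Real.exp (y r)) / (y' r) ^ 2)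
      (𝓝[<] a) (𝓝 (-3 / (2 * a))) := by
  have hnear : ∀ᶠ r in 𝓝[<] a, r ∈ Ioo 0 a ∧ y' r * y'' r = r * exp (y r) := by
    filter_upwards [Ioo_mem_nhdsLT ha, hy'_top.eventually_gt_atTop 0] with r hr hpos
    exact ⟨hr, by rw [hode r hr]; field_simp⟩
  have hratio : Tendsto (fun r : ℝ => -3 / (2 * r)) (𝓝[<] a) (𝓝 (-3 / (2 * a))) :=
    tendsto_nhdsWithin_of_tendsto_nhds
      (tendsto_const_nhds.div (tendsto_id.const_mul 2) (by positivity))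
  refine HasDerivAt.lhopital_nhdsLT_of_tendsto_atTop (f' := fun r => -3 * exp (y r))
    (g' := fun r => 2 * r * exp (y r)) ?_ ?_ ?_ ((tendsto_pow_atTop two_ne_zero).comp hy'_top)
    (hratio.congr' ?_)
  · filter_upwards [hnear] with r ⟨hr, hode_r⟩
    exact hasDerivAt_pow_three_sub_three_mul_exp (hy' r hr) (hy'' r hr) hode_r
  · filter_upwards [hnear] with r ⟨hr, hode_r⟩
    exact hasDerivAt_pow_two_of_mul_eq (hy'' r hr) hode_r
  · filter_upwards [hnear] with r ⟨⟨hr, _⟩, _⟩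
    positivity
  · exact Eventually.of_forall fun r => (mul_div_mul_right _ _ (exp_pos (y r)).ne').symm

theorem calabi_ratio_limit
    (a : ℝ) (ha : 0 < a) (y y' y'' : ℝ → ℝ)
    (hy' : ∀ r ∈ Ioo (0:ℝ) a, HasDerivAt y (y' r) r)
    (hy'' : ∀ r ∈ Ioo (0:ℝ) a, HasDerivAt y' (y'' r) r)
    (hy'pos : ∀ r ∈ Ioo (0:ℝ) a, 0 < y' r)
    (hode : ∀ r ∈ Ioo (0:ℝ) a, y'' r = r * Real.exp (y r) / y' r)
    (hy_top : Tendsto y (𝓝[<] a) atTop)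
    (hy'_top : Tendsto y' (𝓝[<] a) atTop)
    (hlim : Tendsto (fun r => Real.exp (y r) / (y' r) ^ 3) (𝓝[<] a) (𝓝 (1 / (3 * a)))) :
    Tendsto (fun r => ((y' r) ^ 3 - 3 * r * Real.exp (y r)) / (y' r) ^ 2)
      (𝓝[<] a) (𝓝 (-3 / (2 * a))) :=
  calabi_ratio_limit_general a ha y y' y'' hy' hy'' hode hy'_top
end

section
/- Let y : (0,a) → ℝ satisfy the Calabi ODE for n = 2, with y' > 0, y → +∞, y' → +∞, e^{y}/y'³ → 1/(3a) and (y'³ − 3re^{y})/y'² → −3/(2a) as r → a⁻. Define C(r) = −4re^{y}/y' + 24r²e^{2y}/y'⁴ − 36r³e^{3y}/y'⁷ + 36re^{2y}/y'⁵ − 12e^{y}/y'². Then C(r) → 3/a² as r → a⁻. -/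
open Real Set Filter Topology

/-
With `E = e^y / y'^3` and `Q = (y'^3 - 3 r e^y) / y'^2`, the expression `C(r)` is the polynomial
`-4 r E Q^2 - 12 E Q` in `r`, `E`, `Q`; since `E → 1 / (3a)` and `Q → -3 / (2a)`, the limit is
`-4 a (1/(3a)) (9/(4a^2)) + 12 (1/(3a)) (3/(2a)) = 3 / a^2`.
-/

def calabiPoly (r E Q : ℝ) : ℝ := -4 * r * E * Q ^ 2 - 12 * E * Q

theorem calabiPoly_eq {r t p : ℝ} (hp : p ≠ 0) :
    calabiPoly r (exp t / p ^ 3) ((p ^ 3 - 3 * r * exp t) / p ^ 2)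
      = -4 * r * exp t / p + 24 * r ^ 2 * exp (2 * t) / p ^ 4 - 36 * r ^ 3 * exp (3 * t) / p ^ 7
        + 36 * r * exp (2 * t) / p ^ 5 - 12 * exp t / p ^ 2 := by
  rw [calabiPoly, show 2 * t = t + t by ring, show 3 * t = t + t + t by ring]
  simp only [exp_add]
  field_simp
  ring

theorem calabiPoly_limit_value {a : ℝ} (ha : a ≠ 0) :
    calabiPoly a (1 / (3 * a)) (-3 / (2 * a)) = 3 / a ^ 2 := by
  rw [calabiPoly]
  field_simp
  ring

theorem Filter.Tendsto.calabiPoly {α : Type*} {l : Filter α} {r E Q : α → ℝ} {a e q : ℝ}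
    (hr : Tendsto r l (𝓝 a)) (hE : Tendsto E l (𝓝 e)) (hQ : Tendsto Q l (𝓝 q)) :
    Tendsto (fun x => calabiPoly (r x) (E x) (Q x)) l (𝓝 (calabiPoly a e q)) :=
  (((tendsto_const_nhds.mul hr).mul hE).mul (hQ.pow 2)).sub ((tendsto_const_nhds.mul hE).mul hQ)

theorem calabi_C_limit_general
    (a : ℝ) (ha : 0 < a) (y y' : ℝ → ℝ)
    (hy'pos : ∀ r ∈ Ioo (0:ℝ) a, 0 < y' r)
    (hlim : Tendsto (fun r => Real.exp (y r) / (y' r) ^ 3) (𝓝[<] a) (𝓝 (1 / (3 * a))))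
    (hlim2 : Tendsto (fun r => ((y' r) ^ 3 - 3 * r * Real.exp (y r)) / (y' r) ^ 2)
      (𝓝[<] a) (𝓝 (-3 / (2 * a)))) :
    Tendsto (fun r =>
        -4 * r * Real.exp (y r) / y' r
        + 24 * r ^ 2 * Real.exp (2 * y r) / (y' r) ^ 4
        - 36 * r ^ 3 * Real.exp (3 * y r) / (y' r) ^ 7
        + 36 * r * Real.exp (2 * y r) / (y' r) ^ 5
        - 12 * Real.exp (y r) / (y' r) ^ 2)
      (𝓝[<] a) (𝓝 (3 / a ^ 2)) := by
  have hr : Tendsto id (𝓝[<] a) (𝓝 a) := tendsto_nhdsWithin_of_tendsto_nhds tendsto_id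
  have hpoly := hr.calabiPoly hlim hlim2
  rw [calabiPoly_limit_value ha.ne'] at hpoly
  refine hpoly.congr' ?_
  filter_upwards [Ioo_mem_nhdsLT ha] with r hra
  exact calabiPoly_eq (hy'pos r hra).ne'

theorem calabi_C_limit
    (a : ℝ) (ha : 0 < a) (y y' y'' : ℝ → ℝ)
    (hy' : ∀ r ∈ Ioo (0:ℝ) a, HasDerivAt y (y' r) r)
    (hy'' : ∀ r ∈ Ioo (0:ℝ) a, HasDerivAt y' (y'' r) r)
    (hy'pos : ∀ r ∈ Ioo (0:ℝ) a, 0 < y' r)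
    (hode : ∀ r ∈ Ioo (0:ℝ) a, y'' r = r * Real.exp (y r) / y' r)
    (hy_top : Tendsto y (𝓝[<] a) atTop)
    (hy'_top : Tendsto y' (𝓝[<] a) atTop)
    (hlim : Tendsto (fun r => Real.exp (y r) / (y' r) ^ 3) (𝓝[<] a) (𝓝 (1 / (3 * a))))
    (hlim2 : Tendsto (fun r => ((y' r) ^ 3 - 3 * r * Real.exp (y r)) / (y' r) ^ 2)
      (𝓝[<] a) (𝓝 (-3 / (2 * a)))) :
    Tendsto (fun r =>
        -4 * r * Real.exp (y r) / y' r
        + 24 * r ^ 2 * Real.exp (2 * y r) / (y' r) ^ 4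
        - 36 * r ^ 3 * Real.exp (3 * y r) / (y' r) ^ 7
        + 36 * r * Real.exp (2 * y r) / (y' r) ^ 5
        - 12 * Real.exp (y r) / (y' r) ^ 2)
      (𝓝[<] a) (𝓝 (3 / a ^ 2)) :=
  calabi_C_limit_general a ha y y' hy'pos hlim hlim2
end

section
/- Let y be an analytic solution near r = 0 of the n-dimensional Calabi Cauchy problem (y'/r)^{n−1}·y'' = e^y, y'(0) = 0, y''(0) = e^{y(0)/n}. Then all odd-order derivatives of y vanish at 0: y^{(2j+1)}(0) = 0 for every j ∈ ℕ. -/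
/-!
The Calabi equation, multiplied by `r^(n-1)`, is invariant under `r ↦ -r`, so `y` and its
reflection `t r = y (-r)` solve it with the same 2-jet at `0`. Suppose `y - t` has finite order
`k` at `0`. Then so does `e^y - e^t`, and since `(y'^n - t'^n)' = n r^(n-1) (e^y - e^t)`, the
function `y'^n - t'^n` has order `n + k`. But `y'` and `t'` have simple zeros with the same slope
`y''(0) ≠ 0`, which forces the order of `y'^n - t'^n` to be `n + k - 2`. Hence `y - t` vanishes
near `0`, i.e. `y` is even there.
-/

open Real Set Filter Topology

section AnalyticOrder

variable {𝕜 : Type*} [NontriviallyNormedField 𝕜] {z₀ : 𝕜}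

theorem AnalyticAt.analyticOrderAt_eq_deriv_add_one [CharZero 𝕜] [CompleteSpace 𝕜] {f : 𝕜 → 𝕜}
    (hf : AnalyticAt 𝕜 f z₀) (h0 : f z₀ = 0) :
    analyticOrderAt f z₀ = analyticOrderAt (deriv f) z₀ + 1 := by
  simpa [h0] using hf.analyticOrderAt_deriv_add_one.symm

theorem AnalyticAt.deriv_fun_sub_eventuallyEq [CompleteSpace 𝕜] {f g : 𝕜 → 𝕜}
    (hf : AnalyticAt 𝕜 f z₀) (hg : AnalyticAt 𝕜 g z₀) :
    deriv (fun z => f z - g z) =ᶠ[𝓝 z₀] fun z => deriv f z - deriv g z := by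
  filter_upwards [hf.eventually_analyticAt, hg.eventually_analyticAt] with z hfz hgz
  exact deriv_fun_sub hfz.differentiableAt hgz.differentiableAt

theorem analyticOrderAt_pow_sub_pow [CharZero 𝕜] {p q : 𝕜 → 𝕜} (hp : AnalyticAt 𝕜 p z₀)
    (hq : AnalyticAt 𝕜 q z₀) (hpq : p z₀ = q z₀) (hp0 : p z₀ ≠ 0) {n : ℕ} (hn : n ≠ 0) :
    analyticOrderAt (fun z => p z ^ n - q z ^ n) z₀ = analyticOrderAt (fun z => p z - q z) z₀ := by
  set S : 𝕜 → 𝕜 := fun z => ∑ i ∈ Finset.range n, p z ^ i * q z ^ (n - 1 - i)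
  have hS : AnalyticAt 𝕜 S z₀ := Finset.analyticAt_fun_sum _ fun i _ => by fun_prop
  have hS0 : S z₀ = n * p z₀ ^ (n - 1) := by
    calc S z₀ = ∑ _i ∈ Finset.range n, p z₀ ^ (n - 1) :=
          Finset.sum_congr rfl fun i hi => by
            rw [← hpq, ← pow_add, Nat.add_sub_cancel' (by have := Finset.mem_range.mp hi; omega)]
      _ = n * p z₀ ^ (n - 1) := by simp
  have hfactor : (fun z => p z ^ n - q z ^ n) = S * fun z => p z - q z :=
    funext fun z => (geom_sum₂_mul (p z) (q z) n).symm
  rw [hfactor, analyticOrderAt_mul (g := fun z => p z - q z) hS (by fun_prop),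
    hS.analyticOrderAt_eq_zero.mpr
      (by rw [hS0]; exact mul_ne_zero (mod_cast hn) (pow_ne_zero _ hp0)),
    zero_add]

theorem analyticOrderAt_pow_sub_pow_add_one [CharZero 𝕜] [CompleteSpace 𝕜] {f g : 𝕜 → 𝕜}
    (hf : AnalyticAt 𝕜 f z₀) (hg : AnalyticAt 𝕜 g z₀) (hf0 : f z₀ = 0) (hg0 : g z₀ = 0)
    (hfg : deriv f z₀ = deriv g z₀) (hf' : deriv f z₀ ≠ 0) {n : ℕ} (hn : n ≠ 0) :
    analyticOrderAt (fun z => f z ^ n - g z ^ n) z₀ + 1 =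
      n + analyticOrderAt (fun z => f z - g z) z₀ := by
  obtain ⟨_, hpf⟩ := hf
  obtain ⟨_, hpg⟩ := hg
  have hP := hpf.has_fpower_series_dslope_fslope.analyticAt
  have hQ := hpg.has_fpower_series_dslope_fslope.analyticAt
  have hfP (z : 𝕜) : f z = (z - z₀) * dslope f z₀ z := by
    rw [← smul_eq_mul, sub_smul_dslope, hf0, sub_zero]
  have hgQ (z : 𝕜) : g z = (z - z₀) * dslope g z₀ z := by
    rw [← smul_eq_mul, sub_smul_dslope, hg0, sub_zero]
  have hpow : (fun z => f z ^ n - g z ^ n) =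
      (· - z₀) ^ n * fun z => dslope f z₀ z ^ n - dslope g z₀ z ^ n := by
    funext z
    rw [hfP z, hgQ z, mul_pow, mul_pow]
    simp only [Pi.mul_apply, Pi.pow_apply]
    ring
  have hsub : (fun z => f z - g z) = (· - z₀) * fun z => dslope f z₀ z - dslope g z₀ z := by
    funext z
    rw [hfP z, hgQ z]
    simp only [Pi.mul_apply]
    ring
  rw [hpow, hsub, analyticOrderAt_mul (by fun_prop) (by fun_prop),
    analyticOrderAt_mul (by fun_prop) (by fun_prop), analyticOrderAt_centeredMonomial,
    analyticOrderAt_id_sub_const_self,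
    analyticOrderAt_pow_sub_pow hP hQ (by simpa [dslope_same]) (by simpa [dslope_same]) hn]
  ring

end AnalyticOrder

theorem analyticOrderAt_exp_sub_exp {f g : ℝ → ℝ} {x : ℝ} (hf : AnalyticAt ℝ f x)
    (hg : AnalyticAt ℝ g x) :
    analyticOrderAt (fun r => exp (f r) - exp (g r)) x =
      analyticOrderAt (fun r => f r - g r) x := by
  have hfactor : (fun r => exp (f r) - exp (g r)) =
      (fun r => exp (g r)) * ((fun z => exp z - 1) ∘ fun r => f r - g r) := by
    funext r
    simp only [Pi.mul_apply, Function.comp_apply, mul_sub, ← exp_add]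
    ring_nf
  have hexp1 : AnalyticAt ℝ (fun z => exp z - 1) (f x - g x) := by fun_prop
  rw [hfactor, analyticOrderAt_mul (f := fun r => exp (g r)) (by fun_prop)
      (hexp1.comp (f := fun r => f r - g r) (by fun_prop)),
    (show AnalyticAt ℝ (fun r => exp (g r)) x by fun_prop).analyticOrderAt_eq_zero.mpr
      (exp_pos _).ne', zero_add,
    AnalyticAt.analyticOrderAt_comp (g := fun r => f r - g r) (z₀ := x) hexp1 (by fun_prop)]
  by_cases h : f x = g x
  · have hexp1_ord : analyticOrderAt (fun z => exp z - 1) (0 : ℝ) = 1 :=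
      (analyticAt_rexp.fun_sub analyticAt_const).analyticOrderAt_eq_one_of_zero_deriv_ne_zero
        (by simp) (by simp)
    simp [h, hexp1_ord]
  · have hne : f x - g x ≠ 0 := sub_ne_zero.mpr h
    rw [hexp1.analyticOrderAt_eq_zero.mpr (by simpa [sub_eq_zero, exp_eq_one_iff] using hne),
      zero_mul, eq_comm,
      (show AnalyticAt ℝ (fun r => f r - g r) x by fun_prop).analyticOrderAt_eq_zero]
    exact hne

theorem deriv_deriv_comp_neg {𝕜 F : Type*} [NontriviallyNormedField 𝕜] [NormedAddCommGroup F]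
    [NormedSpace 𝕜 F] (f : 𝕜 → F) (x : 𝕜) :
    deriv (deriv fun z => f (-z)) x = deriv (deriv f) (-x) := by
  have h : deriv (fun z => f (-z)) = fun z => -deriv f (-z) := funext (deriv_comp_neg f)
  rw [h, deriv.fun_neg, deriv_comp_neg, neg_neg]

theorem iteratedDeriv_odd_eq_zero_of_eventuallyEq_comp_neg {f : ℝ → ℝ}
    (hf : f =ᶠ[𝓝 0] fun r => f (-r)) (j : ℕ) : iteratedDeriv (2 * j + 1) f 0 = 0 := by
  have h := hf.iteratedDeriv_eq (2 * j + 1)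
  rw [iteratedDeriv_comp_neg, neg_zero, (Odd.neg_one_pow ⟨j, rfl⟩ : (-1 : ℝ) ^ _ = -1),
    neg_one_smul] at h
  linarith

/-- The Calabi equation `(y'/r)^m y'' = e^y`, multiplied by `r^m`, on a neighbourhood of `0`. -/
def SolvesCalabiNearZero (m : ℕ) (y : ℝ → ℝ) : Prop :=
  ∀ᶠ r in 𝓝 0, deriv y r ^ m * deriv (deriv y) r = r ^ m * exp (y r)

namespace SolvesCalabiNearZero

variable {m : ℕ} {y t : ℝ → ℝ}

theorem of_forall_pos {ε : ℝ} (hε : 0 < ε) (hy : AnalyticOnNhd ℝ y (Ioo (-ε) ε))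
    (hode : ∀ r ∈ Ioo (0:ℝ) ε, (deriv y r / r) ^ m * deriv (deriv y) r = exp (y r)) :
    SolvesCalabiNearZero m y := by
  have hdiff : AnalyticOnNhd ℝ
      (fun r => deriv y r ^ m * deriv (deriv y) r - r ^ m * exp (y r)) (Ioo (-ε) ε) :=
    fun r hr => by
      have := hy r hr
      have := hy.deriv r hr
      have := hy.deriv.deriv r hr
      fun_prop
  have hzero := hdiff.eqOn_zero_of_preconnected_of_eventuallyEq_zero isPreconnected_Ioo
    (z₀ := ε / 2) ⟨by linarith, by linarith⟩ <| by
      filter_upwards [Ioo_mem_nhds (half_pos hε) (half_lt_self hε)] with r hr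
      rw [Pi.zero_apply, ← hode r hr, div_pow, sub_eq_zero]
      field_simp [hr.1.ne']
  filter_upwards [Ioo_mem_nhds (neg_lt_zero.2 hε) hε] with r hr
  exact sub_eq_zero.mp (hzero hr)

theorem comp_neg (hy : SolvesCalabiNearZero m y) : SolvesCalabiNearZero m fun r => y (-r) := by
  filter_upwards [(continuous_neg.tendsto' (0 : ℝ) 0 neg_zero).eventually hy] with r hr
  rw [deriv_deriv_comp_neg, deriv_comp_neg, neg_pow, mul_assoc, hr, ← mul_assoc, ← mul_pow]
  norm_num

theorem deriv_pow_succ (hy : SolvesCalabiNearZero m y) (hya : AnalyticAt ℝ y 0) :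
    deriv (fun r => deriv y r ^ (m + 1)) =ᶠ[𝓝 0] fun r => (m + 1) * r ^ m * exp (y r) := by
  filter_upwards [hy, hya.deriv.eventually_analyticAt] with r hr hdiff
  rw [deriv_fun_pow hdiff.differentiableAt, Nat.add_sub_cancel, mul_assoc, hr]
  push_cast
  ring

theorem eventuallyEq_of_jet_eq (hy : SolvesCalabiNearZero m y) (ht : SolvesCalabiNearZero m t)
    (hya : AnalyticAt ℝ y 0) (hta : AnalyticAt ℝ t 0) (h0 : y 0 = t 0) (hy1 : deriv y 0 = 0)
    (ht1 : deriv t 0 = 0) (h2 : deriv (deriv y) 0 = deriv (deriv t) 0)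
    (hy2 : deriv (deriv y) 0 ≠ 0) : y =ᶠ[𝓝 0] t := by
  set D : ℝ → ℝ := fun r => deriv y r ^ (m + 1) - deriv t r ^ (m + 1)
  have hu : analyticOrderAt (fun r => y r - t r) 0 =
      analyticOrderAt (fun r => deriv y r - deriv t r) 0 + 1 := by
    rw [(hya.fun_sub hta).analyticOrderAt_eq_deriv_add_one (sub_eq_zero.mpr h0),
      analyticOrderAt_congr (hya.deriv_fun_sub_eventuallyEq hta)]
  have hD : analyticOrderAt D 0 = analyticOrderAt (deriv D) 0 + 1 :=
    AnalyticAt.analyticOrderAt_eq_deriv_add_one (by fun_prop) (by simp [D, hy1, ht1])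
  have hD' : analyticOrderAt (deriv D) 0 = m + analyticOrderAt (fun r => y r - t r) 0 := by
    have hfactor :
        ((fun r => (m + 1) * r ^ m * exp (y r)) - fun r => (m + 1) * r ^ m * exp (t r)) =
          (· - 0) ^ m * ((fun _ => (m + 1 : ℝ)) * fun r => exp (y r) - exp (t r)) := by
      funext r
      simp only [Pi.sub_apply, Pi.mul_apply, Pi.pow_apply, sub_zero]
      ring
    have hderivD : deriv D =ᶠ[𝓝 0] _ :=
      ((hya.deriv.fun_pow _).deriv_fun_sub_eventuallyEq (hta.deriv.fun_pow _)).trans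
        ((hy.deriv_pow_succ hya).sub (ht.deriv_pow_succ hta))
    rw [analyticOrderAt_congr hderivD, hfactor,
      analyticOrderAt_mul (by fun_prop) (by fun_prop), analyticOrderAt_centeredMonomial,
      analyticOrderAt_mul (by fun_prop) (by fun_prop),
      (analyticAt_const (v := (m + 1 : ℝ))).analyticOrderAt_eq_zero.mpr (by positivity), zero_add,
      analyticOrderAt_exp_sub_exp hya hta]
  have hpow := analyticOrderAt_pow_sub_pow_add_one hya.deriv hta.deriv hy1 ht1 h2 hy2
    m.succ_ne_zero
  have htop : analyticOrderAt (fun r => deriv y r - deriv t r) 0 = ⊤ := by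
    rw [hD, hD', hu] at hpow
    generalize analyticOrderAt (fun r => deriv y r - deriv t r) 0 = a at hpow
    induction a using ENat.recTopCoe with
    | top => rfl
    | coe a => norm_cast at hpow; omega
  filter_upwards [analyticOrderAt_eq_top.mp (by rw [hu, htop]; rfl)] with r hr
  exact sub_eq_zero.mp hr

end SolvesCalabiNearZero

theorem calabi_odd_derivatives_vanish_general
    (n : ℕ) (ε : ℝ) (hε : 0 < ε) (y : ℝ → ℝ)
    (hanalytic : AnalyticOnNhd ℝ y (Ioo (-ε) ε))
    (hode : ∀ r ∈ Ioo (0:ℝ) ε,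
      (deriv y r / r) ^ (n - 1) * deriv (deriv y) r = Real.exp (y r))
    (h1 : deriv y 0 = 0)
    (h2 : deriv (deriv y) 0 = Real.exp (y 0 / n)) :
    ∀ j : ℕ, iteratedDeriv (2 * j + 1) y 0 = 0 := by
  have hy : AnalyticAt ℝ y 0 := hanalytic 0 ⟨neg_lt_zero.2 hε, hε⟩
  have hsol : SolvesCalabiNearZero (n - 1) y := .of_forall_pos hε hanalytic hode
  have heven : y =ᶠ[𝓝 0] fun r => y (-r) :=
    hsol.eventuallyEq_of_jet_eq hsol.comp_neg hy (hy.comp_of_eq analyticAt_id.neg neg_zero)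
      (by simp) h1 (by simp [deriv_comp_neg, h1]) (by rw [deriv_deriv_comp_neg, neg_zero])
      (h2 ▸ (exp_pos _).ne')
  exact iteratedDeriv_odd_eq_zero_of_eventuallyEq_comp_neg heven

/-- For an analytic solution near `0` of the n-dimensional Calabi Cauchy problem
`(y'/r)^{n-1} y'' = e^y`, `y'(0) = 0`, `y''(0) = e^{y(0)/n}`, all odd-order
derivatives of `y` vanish at `0`. -/
theorem calabi_odd_derivatives_vanish
    (n : ℕ) (hn : 1 ≤ n) (ε : ℝ) (hε : 0 < ε) (y : ℝ → ℝ)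
    (hanalytic : AnalyticOnNhd ℝ y (Ioo (-ε) ε))
    (hode : ∀ r ∈ Ioo (0:ℝ) ε,
      (deriv y r / r) ^ (n - 1) * deriv (deriv y) r = Real.exp (y r))
    (h1 : deriv y 0 = 0)
    (h2 : deriv (deriv y) 0 = Real.exp (y 0 / n)) :
    ∀ j : ℕ, iteratedDeriv (2 * j + 1) y 0 = 0 :=
  calabi_odd_derivatives_vanish_general n ε hε y hanalytic hode h1 h2
end

section
/- Let y be a smooth solution near r = 0 of the n = 2 Calabi Cauchy problem with Taylor coefficients b₂ = (1/2)e^{y(0)/2}, b₄ = (1/32)e^{y(0)}, b₆ = (7/2304)e^{3y(0)/2}. Define P(r) = y'(r)/r. Then lim_{r→0⁺} ( −8e^{3y} + 4P²e^{2y} − 2P⁴e^{y} + 6P⁶ ) / r² = −(9/2)e^{7y(0)/2}. -/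
open Real Set Filter Topology

lemma slope_tendsto_right {f : ℝ → ℝ} {f' : ℝ} (h : HasDerivAt f f' 0) (h0 : f 0 = 0) :
    Tendsto (fun r => f r / r) (𝓝[>] (0:ℝ)) (𝓝 f') := by
  have h1 : Tendsto (slope f 0) (𝓝[≠] (0:ℝ)) (𝓝 f') := hasDerivAt_iff_tendsto_slope.1 h
  have h2 := h1.mono_left (nhdsWithin_mono _ fun x hx => ne_of_gt hx)
  refine h2.congr fun r => ?_
  simp [slope_def_field, h0]

set_option maxHeartbeats 1000000 in
theorem calabi_P_limit_one
    (ε : ℝ) (hε : 0 < ε) (y : ℝ → ℝ)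
    (hsmooth : ContDiffOn ℝ (⊤ : ℕ∞) y (Ioo (-ε) ε))
    (hode : ∀ r ∈ Ioo (0:ℝ) ε,
      (deriv y r / r) * deriv (deriv y) r = Real.exp (y r))
    (h1 : deriv y 0 = 0)
    (h2 : deriv (deriv y) 0 = Real.exp (y 0 / 2))
    (hb2 : iteratedDeriv 2 y 0 / (Nat.factorial 2) = (1 / 2) * Real.exp (y 0 / 2))
    (hb4 : iteratedDeriv 4 y 0 / (Nat.factorial 4) = (1 / 32) * Real.exp (y 0))
    (hb6 : iteratedDeriv 6 y 0 / (Nat.factorial 6) = (7 / 2304) * Real.exp (3 * y 0 / 2))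
 :
    Tendsto (fun r =>
        (-8 * Real.exp (3 * y r)
          + 4 * (deriv y r / r) ^ 2 * Real.exp (2 * y r)
          - 2 * (deriv y r / r) ^ 4 * Real.exp (y r)
          + 6 * (deriv y r / r) ^ 6) / r ^ 2)
      (𝓝[>] 0) (𝓝 (-(9 / 2) * Real.exp (7 * y 0 / 2))) := by
  set c := y 0 with hc
  set a := Real.exp (c / 2) with ha
  have ha2 : a ^ 2 = Real.exp c := by
    rw [ha, ← Real.exp_nat_mul]; ring_nf
  have hapos : 0 < a := Real.exp_pos _
  have hs : IsOpen (Ioo (-ε) ε) := isOpen_Ioo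
  have h0s : (0:ℝ) ∈ Ioo (-ε) ε := ⟨by linarith, hε⟩
  have hy : ContDiffOn ℝ (⊤:ℕ∞) y (Ioo (-ε) ε) := hsmooth.of_le (by simp)
  obtain ⟨hyd, hy1⟩ := (contDiffOn_infty_iff_deriv_of_isOpen hs).1 hy
  obtain ⟨hy1d, hy2⟩ := (contDiffOn_infty_iff_deriv_of_isOpen hs).1 hy1
  obtain ⟨hy2d, hy3⟩ := (contDiffOn_infty_iff_deriv_of_isOpen hs).1 hy2
  obtain ⟨hy3d, hy4⟩ := (contDiffOn_infty_iff_deriv_of_isOpen hs).1 hy3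
  have hyD : ∀ x ∈ Ioo (-ε) ε, DifferentiableAt ℝ y x :=
    fun x hx => hyd.differentiableAt (hs.mem_nhds hx)
  have hy1D : ∀ x ∈ Ioo (-ε) ε, DifferentiableAt ℝ (deriv y) x :=
    fun x hx => hy1d.differentiableAt (hs.mem_nhds hx)
  have hy2D : ∀ x ∈ Ioo (-ε) ε, DifferentiableAt ℝ (deriv (deriv y)) x :=
    fun x hx => hy2d.differentiableAt (hs.mem_nhds hx)
  have hy3D : ∀ x ∈ Ioo (-ε) ε, DifferentiableAt ℝ (deriv (deriv (deriv y))) x :=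
    fun x hx => hy3d.differentiableAt (hs.mem_nhds hx)
  -- continuity limits along 𝓝[>] 0
  have hyC : Tendsto y (𝓝[>] (0:ℝ)) (𝓝 c) :=
    ((hy.continuousOn.continuousAt (hs.mem_nhds h0s)).tendsto).mono_left nhdsWithin_le_nhds
  have hy1C : Tendsto (deriv y) (𝓝[>] (0:ℝ)) (𝓝 0) := by
    have := ((hy1.continuousOn.continuousAt (hs.mem_nhds h0s)).tendsto).mono_left
      (nhdsWithin_le_nhds (s := Ioi (0:ℝ)))
    rwa [h1] at this
  have hy2C : Tendsto (deriv (deriv y)) (𝓝[>] (0:ℝ)) (𝓝 a) := by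
    have := ((hy2.continuousOn.continuousAt (hs.mem_nhds h0s)).tendsto).mono_left
      (nhdsWithin_le_nhds (s := Ioi (0:ℝ)))
    rwa [h2] at this
  have hy3C : Tendsto (deriv (deriv (deriv y))) (𝓝[>] (0:ℝ))
      (𝓝 (deriv (deriv (deriv y)) 0)) :=
    ((hy3.continuousOn.continuousAt (hs.mem_nhds h0s)).tendsto).mono_left nhdsWithin_le_nhds
  have hEC : Tendsto (fun r => Real.exp (y r)) (𝓝[>] (0:ℝ)) (𝓝 (Real.exp c)) := Real.continuous_exp.continuousAt.tendsto.comp hyC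
  -- eventual membership
  have hev : ∀ᶠ x in 𝓝[>] (0:ℝ), x ∈ Ioo (-ε) ε ∧ 0 < x := by
    filter_upwards [nhdsWithin_le_nhds (hs.mem_nhds h0s), self_mem_nhdsWithin] with x hx hx'
    exact ⟨hx, hx'⟩
  have hevI : ∀ᶠ x in 𝓝[>] (0:ℝ), x ∈ Ioo (0:ℝ) ε := by
    filter_upwards [hev] with x hx
    exact ⟨hx.2, hx.1.2⟩
  have hsub : Ioo (0:ℝ) ε ⊆ Ioo (-ε) ε := fun x hx => ⟨by linarith [hx.1], hx.2⟩
  -- value of fourth derivative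
  have hd4 : deriv (deriv (deriv (deriv y))) 0 = (3/4) * Real.exp c := by
    have h4 : iteratedDeriv 4 y 0 = deriv (deriv (deriv (deriv y))) 0 := by
      rw [show (4:ℕ) = 0+1+1+1+1 from rfl, iteratedDeriv_succ, iteratedDeriv_succ,
        iteratedDeriv_succ, iteratedDeriv_succ, iteratedDeriv_zero]
    have hfac : ((Nat.factorial 4 : ℕ) : ℝ) = 24 := by norm_num [Nat.factorial]
    rw [hfac, div_eq_iff (by norm_num : (24:ℝ) ≠ 0)] at hb4
    rw [← h4, hb4]; ring
  -- the ODE multiplied by r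
  have hodeq : ∀ r ∈ Ioo (0:ℝ) ε, deriv y r * deriv (deriv y) r = r * Real.exp (y r) := by
    intro r hr
    have hr0 : r ≠ 0 := ne_of_gt hr.1
    have h := hode r hr
    rw [div_mul_eq_mul_div, div_eq_iff hr0] at h
    rw [h]; ring
  -- derivative of the ODE at r ∈ (0, ε)
  have hNder : ∀ r ∈ Ioo (0:ℝ) ε,
      deriv (deriv y) r * deriv (deriv y) r + deriv y r * deriv (deriv (deriv y)) r
        - (1 * Real.exp (y r) + r * (Real.exp (y r) * deriv y r)) = 0 := by
    intro r hr
    have hrs := hsub hr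
    have hA : HasDerivAt (fun t => deriv y t * deriv (deriv y) t)
        (deriv (deriv y) r * deriv (deriv y) r + deriv y r * deriv (deriv (deriv y)) r) r :=
      ((hy1D r hrs).hasDerivAt).mul ((hy2D r hrs).hasDerivAt)
    have hB : HasDerivAt (fun t => t * Real.exp (y t))
        (1 * Real.exp (y r) + r * (Real.exp (y r) * deriv y r)) r :=
      (hasDerivAt_id r).mul (((hyD r hrs).hasDerivAt).exp)
    have hN := hA.sub hB
    have hzero : deriv (fun t => deriv y t * deriv (deriv y) t - t * Real.exp (y t)) r = 0 := by
      have hev0 : (fun t => deriv y t * deriv (deriv y) t - t * Real.exp (y t))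
          =ᶠ[𝓝 r] (fun _ => (0:ℝ)) := by
        filter_upwards [isOpen_Ioo.mem_nhds hr] with t ht
        rw [hodeq t ht]; ring
      rw [hev0.deriv_eq]; simp
    have : deriv (fun t => deriv y t * deriv (deriv y) t - t * Real.exp (y t)) r = _ := hN.deriv
    rw [hzero] at this
    linarith [this]
  -- third derivative vanishes at 0
  have hd3 : deriv (deriv (deriv y)) 0 = 0 := by
    set d3 := deriv (deriv (deriv y)) 0 with hd3def
    have t1 : Tendsto (fun r => (deriv (deriv y) r ^ 2 - Real.exp (y r)) / r)
        (𝓝[>] (0:ℝ)) (𝓝 (2 * a ^ 1 * d3 - Real.exp c * 0)) := by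
      apply slope_tendsto_right
      · have : HasDerivAt (fun r => deriv (deriv y) r ^ 2 - Real.exp (y r)) _ 0 := (((hy2D 0 h0s).hasDerivAt).pow 2).sub (((hyD 0 h0s).hasDerivAt).exp)
        simpa [h1, h2, ← ha, ← hc, hd3def] using this
      · simp [h2, ← ha, ← hc, ha2]
    have t2 : Tendsto (fun r => deriv y r / r) (𝓝[>] (0:ℝ)) (𝓝 a) := by
      apply slope_tendsto_right _ h1
      have := (hy1D 0 h0s).hasDerivAt
      rwa [h2] at this
    have hT : Tendsto (fun r => (deriv (deriv y) r ^ 2 - Real.exp (y r)) / r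
        + (deriv y r / r) * deriv (deriv (deriv y)) r
        - Real.exp (y r) * deriv y r) (𝓝[>] (0:ℝ))
        (𝓝 ((2 * a ^ 1 * d3 - Real.exp c * 0) + a * d3 - Real.exp c * 0)) :=
      (t1.add (t2.mul hy3C)).sub (hEC.mul hy1C)
    have hT0 : Tendsto (fun r => (deriv (deriv y) r ^ 2 - Real.exp (y r)) / r
        + (deriv y r / r) * deriv (deriv (deriv y)) r
        - Real.exp (y r) * deriv y r) (𝓝[>] (0:ℝ)) (𝓝 0) := by
      apply Tendsto.congr' _ tendsto_const_nhds
      filter_upwards [hevI] with r hr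
      have hr0 : r ≠ 0 := ne_of_gt hr.1
      have h := hNder r hr
      have expand : (deriv (deriv y) r ^ 2 - Real.exp (y r)) / r
          + (deriv y r / r) * deriv (deriv (deriv y)) r
          - Real.exp (y r) * deriv y r
          = (deriv (deriv y) r * deriv (deriv y) r + deriv y r * deriv (deriv (deriv y)) r
            - (1 * Real.exp (y r) + r * (Real.exp (y r) * deriv y r))) / r := by
        field_simp
        ring
      rw [expand, h, zero_div]
    have := tendsto_nhds_unique hT hT0
    have h3ad3 : 3 * a * d3 = 0 := by
      have : 2 * a ^ 1 * d3 - Real.exp c * 0 + a * d3 - Real.exp c * 0 = 3 * a * d3 := by ring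
      linarith [this ▸ tendsto_nhds_unique hT hT0]
    have := mul_eq_zero.1 h3ad3
    rcases this with h' | h'
    · exact absurd h' (by positivity)
    · exact h'
  -- limit: deriv y r / r → a
  have LimP : Tendsto (fun r => deriv y r / r) (𝓝[>] (0:ℝ)) (𝓝 a) := by
    apply slope_tendsto_right _ h1
    have := (hy1D 0 h0s).hasDerivAt
    rwa [h2] at this
  -- limit: (y''(r) - a)/r² → 3a²/8
  have Lim2 : Tendsto (fun x => (deriv (deriv y) x - a) / x ^ 2) (𝓝[>] (0:ℝ))
      (𝓝 (3/8 * a ^ 2)) := by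
    apply deriv.lhopital_zero_nhdsGT (f := fun x => deriv (deriv y) x - a)
      (g := fun x => x ^ 2)
    · filter_upwards [hev] with x hx
      exact (hy2D x hx.1).sub_const a
    · filter_upwards [hev] with x hx
      rw [deriv_pow_field 2]
      have : (0:ℝ) < x := hx.2
      positivity
    · have := hy2C.sub_const a
      simpa using this
    · have : Tendsto (fun x : ℝ => x ^ 2) (𝓝[>] (0:ℝ)) (𝓝 ((0:ℝ) ^ 2)) :=
        (continuous_pow 2).continuousAt.tendsto.mono_left nhdsWithin_le_nhds
      simpa using this
    · have hsl : Tendsto (fun x => deriv (deriv (deriv y)) x / x) (𝓝[>] (0:ℝ))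
          (𝓝 ((3/4) * Real.exp c)) := by
        apply slope_tendsto_right _ hd3
        have := (hy3D 0 h0s).hasDerivAt
        rwa [hd4] at this
      have : Tendsto (fun x => (deriv (deriv (deriv y)) x / x) / 2) (𝓝[>] (0:ℝ))
          (𝓝 (((3/4) * Real.exp c) / 2)) := hsl.div_const 2
      apply Tendsto.congr' _ (by rwa [show ((3/4) * Real.exp c)/2 = 3/8 * a^2 by
        rw [← ha2]; ring] at this)
      filter_upwards [hev] with x hx
      have hder : deriv (fun x => deriv (deriv y) x - a) x = deriv (deriv (deriv y)) x := by
        rw [deriv_sub_const]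
      rw [hder, deriv_pow_field 2]
      push_cast
      ring
  -- limit: (y'(r) - a r)/r³ → a²/8
  have LimA : Tendsto (fun r => (deriv y r - a * r) / r ^ 3) (𝓝[>] (0:ℝ))
      (𝓝 (a ^ 2 / 8)) := by
    apply deriv.lhopital_zero_nhdsGT (f := fun r => deriv y r - a * r)
      (g := fun r => r ^ 3)
    · filter_upwards [hev] with x hx
      exact (hy1D x hx.1).sub ((differentiableAt_id.const_mul a))
    · filter_upwards [hev] with x hx
      rw [deriv_pow_field 3]
      have : (0:ℝ) < x := hx.2
      positivity
    · have : Tendsto (fun r => deriv y r - a * r) (𝓝[>] (0:ℝ)) (𝓝 (0 - a * 0)) :=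
        hy1C.sub ((tendsto_id.const_mul a).mono_left nhdsWithin_le_nhds)
      simpa using this
    · have : Tendsto (fun x : ℝ => x ^ 3) (𝓝[>] (0:ℝ)) (𝓝 ((0:ℝ) ^ 3)) :=
        (continuous_pow 3).continuousAt.tendsto.mono_left nhdsWithin_le_nhds
      simpa using this
    · have : Tendsto (fun x => ((deriv (deriv y) x - a) / x ^ 2) / 3) (𝓝[>] (0:ℝ))
          (𝓝 ((3/8 * a ^ 2) / 3)) := Lim2.div_const 3
      apply Tendsto.congr' _ (by rwa [show (3/8 * a^2)/3 = a^2/8 by ring] at this)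
      filter_upwards [hev] with x hx
      have hder : deriv (fun r => deriv y r - a * r) x = deriv (deriv y) x - a := by
        have : deriv (fun r => deriv y r - a * r) x = _ := ((hy1D x hx.1).hasDerivAt.sub ((hasDerivAt_id x).const_mul a)).deriv
        simpa using this
      rw [hder, deriv_pow_field 3]
      push_cast
      ring
  -- limit: (exp(y r) - exp c)/r² → exp c * a / 2
  have LimB : Tendsto (fun r => (Real.exp (y r) - Real.exp c) / r ^ 2) (𝓝[>] (0:ℝ))
      (𝓝 (Real.exp c * a / 2)) := by
    apply deriv.lhopital_zero_nhdsGT (f := fun r => Real.exp (y r) - Real.exp c)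
      (g := fun r => r ^ 2)
    · filter_upwards [hev] with x hx
      exact ((hyD x hx.1).exp).sub_const _
    · filter_upwards [hev] with x hx
      rw [deriv_pow_field 2]
      have : (0:ℝ) < x := hx.2
      positivity
    · have := hEC.sub_const (Real.exp c)
      simpa using this
    · have : Tendsto (fun x : ℝ => x ^ 2) (𝓝[>] (0:ℝ)) (𝓝 ((0:ℝ) ^ 2)) :=
        (continuous_pow 2).continuousAt.tendsto.mono_left nhdsWithin_le_nhds
      simpa using this
    · have hlim : Tendsto (fun x => Real.exp (y x) * (deriv y x / x) / 2) (𝓝[>] (0:ℝ))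
          (𝓝 (Real.exp c * a / 2)) := (hEC.mul LimP).div_const 2
      apply Tendsto.congr' _ hlim
      filter_upwards [hev] with x hx
      have hder : deriv (fun r => Real.exp (y r) - Real.exp c) x
          = Real.exp (y x) * deriv y x := by
        rw [deriv_sub_const]
        exact (((hyD x hx.1).hasDerivAt).exp).deriv
      rw [hder, deriv_pow_field 2]
      push_cast
      ring
  -- assembly
  have hGlim : Tendsto (fun r =>
      (((deriv y r - a * r) / r ^ 3) * (deriv y r / r + a)
        - (Real.exp (y r) - Real.exp c) / r ^ 2)
      * (6 * (deriv y r / r) ^ 4 + 4 * Real.exp (y r) * (deriv y r / r) ^ 2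
        + 8 * Real.exp (y r) ^ 2)) (𝓝[>] (0:ℝ))
      (𝓝 ((a ^ 2 / 8 * (a + a) - Real.exp c * a / 2)
        * (6 * a ^ 4 + 4 * Real.exp c * a ^ 2 + 8 * Real.exp c ^ 2))) := by
    have l1 := (LimA.mul (LimP.add_const a)).sub LimB
    have l3 := (LimP.pow 4).const_mul (6:ℝ)
    have l4 := (hEC.const_mul (4:ℝ)).mul (LimP.pow 2)
    have l5 := (hEC.pow 2).const_mul (8:ℝ)
    exact l1.mul ((l3.add l4).add l5)
  have hval : -(9 / 2 : ℝ) * Real.exp (7 * c / 2)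
      = (a ^ 2 / 8 * (a + a) - Real.exp c * a / 2)
        * (6 * a ^ 4 + 4 * Real.exp c * a ^ 2 + 8 * Real.exp c ^ 2) := by
    have ha7 : Real.exp (7 * c / 2) = a ^ 7 := by
      rw [ha, ← Real.exp_nat_mul]; ring_nf
    rw [ha7, ← ha2]; ring
  rw [hval]
  apply Tendsto.congr' _ hGlim
  filter_upwards [hev] with r hr
  have hr0 : r ≠ 0 := ne_of_gt hr.2
  have e3 : Real.exp (3 * y r) = Real.exp (y r) ^ 3 := by
    rw [show (3:ℝ) * y r = ((3:ℕ):ℝ) * y r by norm_num, Real.exp_nat_mul]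
  have e2 : Real.exp (2 * y r) = Real.exp (y r) ^ 2 := by
    rw [show (2:ℝ) * y r = ((2:ℕ):ℝ) * y r by norm_num, Real.exp_nat_mul]
  rw [← ha2, e3, e2]
  field_simp
  ring
end

section
/- Let y be a smooth solution near r = 0 of the n = 2 Calabi Cauchy problem with the Taylor expansion as above, and P(r) = y'(r)/r. Then lim_{r→0⁺} ( e^{4y} − P²e^{3y} − P⁶e^{y} + P⁸ ) / r⁴ = (3/16)e^{5y(0)}. -/
open Real Set Filter Topology

theorem calabi_P_limit_two
    (ε : ℝ) (hε : 0 < ε) (y : ℝ → ℝ)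
    (hsmooth : ContDiffOn ℝ (⊤ : ℕ∞) y (Ioo (-ε) ε))
    (hode : ∀ r ∈ Ioo (0:ℝ) ε,
      (deriv y r / r) * deriv (deriv y) r = Real.exp (y r))
    (h1 : deriv y 0 = 0)
    (h2 : deriv (deriv y) 0 = Real.exp (y 0 / 2))
    (hb2 : iteratedDeriv 2 y 0 / (Nat.factorial 2) = (1 / 2) * Real.exp (y 0 / 2))
    (hb4 : iteratedDeriv 4 y 0 / (Nat.factorial 4) = (1 / 32) * Real.exp (y 0))
    (hb6 : iteratedDeriv 6 y 0 / (Nat.factorial 6) = (7 / 2304) * Real.exp (3 * y 0 / 2))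
 :
    Tendsto (fun r =>
        (Real.exp (4 * y r)
          - (deriv y r / r) ^ 2 * Real.exp (3 * y r)
          - (deriv y r / r) ^ 6 * Real.exp (y r)
          + (deriv y r / r) ^ 8) / r ^ 4)
      (𝓝[>] 0) (𝓝 ((3 / 16) * Real.exp (5 * y 0))) := by
  have hU : IsOpen (Ioo (-ε) ε) := isOpen_Ioo
  have h0U : (0:ℝ) ∈ Ioo (-ε) ε := ⟨by linarith, hε⟩
  have hUnhds : Ioo (-ε) ε ∈ 𝓝 (0:ℝ) := hU.mem_nhds h0U
  have hUnhdsR : Ioo (-ε) ε ∈ 𝓝[>] (0:ℝ) := nhdsWithin_le_nhds hUnhds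
  have hIooR : Ioo (0:ℝ) ε ∈ 𝓝[>] (0:ℝ) := Ioo_mem_nhdsGT_of_mem ⟨le_refl 0, hε⟩
  have hmono : 𝓝[>] (0:ℝ) ≤ 𝓝[≠] (0:ℝ) :=
    nhdsWithin_mono 0 (fun x hx => ne_of_gt hx)
  set E := Real.exp (y 0 / 2) with hE
  set y1 := deriv y with hy1def
  set y2 := deriv y1 with hy2def
  set y3 := deriv y2 with hy3def
  set y4 := deriv y3 with hy4def
  have hEpos : 0 < E := Real.exp_pos _
  have hE2 : E ^ 2 = Real.exp (y 0) := by
    rw [hE, sq, ← Real.exp_add]; ring_nf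
  -- smoothness of derivatives
  have hs1 : ContDiffOn ℝ (⊤ : ℕ∞) y1 (Ioo (-ε) ε) := hsmooth.deriv_of_isOpen hU (by simp)
  have hs2 : ContDiffOn ℝ (⊤ : ℕ∞) y2 (Ioo (-ε) ε) := hs1.deriv_of_isOpen hU (by simp)
  have hs3 : ContDiffOn ℝ (⊤ : ℕ∞) y3 (Ioo (-ε) ε) := hs2.deriv_of_isOpen hU (by simp)
  have hdiffAt : ∀ (f : ℝ → ℝ), ContDiffOn ℝ (⊤ : ℕ∞) f (Ioo (-ε) ε) →
      ∀ x ∈ Ioo (-ε) ε, HasDerivAt f (deriv f x) x := fun f hf x hx =>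
    (((hf.differentiableOn (by simp)) x hx).differentiableAt (hU.mem_nhds hx)).hasDerivAt
  have hd0 : ∀ x ∈ Ioo (-ε) ε, HasDerivAt y (y1 x) x := hdiffAt y hsmooth
  have hd1 : ∀ x ∈ Ioo (-ε) ε, HasDerivAt y1 (y2 x) x := hdiffAt y1 hs1
  have hd2 : ∀ x ∈ Ioo (-ε) ε, HasDerivAt y2 (y3 x) x := hdiffAt y2 hs2
  have hd3 : ∀ x ∈ Ioo (-ε) ε, HasDerivAt y3 (y4 x) x := hdiffAt y3 hs3
  -- value of the fourth derivative
  have hy4 : y4 0 = 3 / 4 * E ^ 2 := by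
    have h4 : iteratedDeriv 4 y = y4 := by
      rw [hy4def, hy3def, hy2def, hy1def]
      simp [iteratedDeriv_succ, iteratedDeriv_zero,
        show (4:ℕ) = 0 + 1 + 1 + 1 + 1 by norm_num]
    rw [h4] at hb4
    have hfac : ((Nat.factorial 4 : ℕ) : ℝ) = 24 := by norm_num [Nat.factorial]
    rw [hfac] at hb4
    rw [hE2]
    linarith [hb4]
  -- third derivative vanishes at 0 (from the ODE)
  have hy3_0 : y3 0 = 0 := by
    set g : ℝ → ℝ := fun r => y1 r * y2 r - r * Real.exp (y r) with hgdef
    set g1 : ℝ → ℝ := fun r =>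
      (y2 r * y2 r + y1 r * y3 r)
        - (1 * Real.exp (y r) + r * (Real.exp (y r) * y1 r)) with hg1def
    have hgzero : ∀ r ∈ Ioo (0:ℝ) ε, g r = 0 := by
      intro r hr
      have hr0 : r ≠ 0 := ne_of_gt hr.1
      have h := hode r hr
      rw [hgdef]
      field_simp at h ⊢
      linarith [h]
    have hgd : ∀ x ∈ Ioo (-ε) ε, HasDerivAt g (g1 x) x := by
      intro x hx
      have H := ((hd1 x hx).mul (hd2 x hx)).sub
        ((hasDerivAt_id x).mul ((hd0 x hx).exp))
      exact (H.congr_deriv (by simp only [id_eq]; rfl))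
    have hg1zero : ∀ r ∈ Ioo (0:ℝ) ε, g1 r = 0 := by
      intro r hr
      have hrU : r ∈ Ioo (-ε) ε := ⟨by linarith [hr.1], hr.2⟩
      have hne : g =ᶠ[𝓝 r] (fun _ => (0:ℝ)) :=
        eventually_of_mem (isOpen_Ioo.mem_nhds hr) hgzero
      have hdg : deriv g r = 0 := by
        rw [hne.deriv_eq]; exact deriv_const r 0
      rw [← (hgd r hrU).deriv, hdg]
    -- derivative of g1 at 0
    have Hg1 : HasDerivAt g1 (3 * E * y3 0) 0 := by
      have H := (((hd2 0 h0U).mul (hd2 0 h0U)).add ((hd1 0 h0U).mul (hd3 0 h0U))).sub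
        (((hasDerivAt_const (0:ℝ) (1:ℝ)).mul ((hd0 0 h0U).exp)).add
          ((hasDerivAt_id (0:ℝ)).mul (((hd0 0 h0U).exp).mul (hd1 0 h0U))))
      exact (H.congr_deriv (by simp only [id_eq]; simp [h1, h2]; ring))
    have hg1at0 : g1 0 = 0 := by
      rw [hg1def]; simp [h1, h2, ← hE2]; ring
    have hslope : Tendsto (slope g1 0) (𝓝[>] (0:ℝ)) (𝓝 (3 * E * y3 0)) :=
      (hasDerivAt_iff_tendsto_slope.mp Hg1).mono_left hmono
    have hslope0 : Tendsto (slope g1 0) (𝓝[>] (0:ℝ)) (𝓝 0) := by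
      refine Tendsto.congr' ?_ tendsto_const_nhds
      filter_upwards [hIooR] with r hr
      simp [slope, hg1zero r hr, hg1at0]
    have huniq : 3 * E * y3 0 = 0 := tendsto_nhds_unique hslope hslope0
    have : E * y3 0 = 0 := by linarith
    rcases mul_eq_zero.mp this with h | h
    · exact absurd h (ne_of_gt hEpos)
    · exact h
  -- limit of P = y1 r / r
  have LP : Tendsto (fun r => y1 r / r) (𝓝[>] (0:ℝ)) (𝓝 E) := by
    have H := hasDerivAt_iff_tendsto_slope.mp (hd1 0 h0U)
    rw [h2] at H
    refine (H.mono_left hmono).congr' ?_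
    filter_upwards [hIooR] with r hr
    simp [slope, h1]; ring
  -- innermost L'Hopital
  have L2 : Tendsto (fun r => y3 r / (6 * r)) (𝓝[>] (0:ℝ)) (𝓝 (E ^ 2 / 8)) := by
    have H := hasDerivAt_iff_tendsto_slope.mp (hd3 0 h0U)
    rw [hy4] at H
    have H2 : Tendsto (fun r => y3 r / r) (𝓝[>] (0:ℝ)) (𝓝 (3 / 4 * E ^ 2)) := by
      refine (H.mono_left hmono).congr' ?_
      filter_upwards [hIooR] with r hr
      simp [slope, hy3_0]; ring
    have := H2.div_const 6
    refine this.congr' ?_ |>.mono_right ?_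
    · filter_upwards [hIooR] with r hr
      rw [div_div]; ring_nf
    · rw [show (3:ℝ) / 4 * E ^ 2 / 6 = E ^ 2 / 8 by ring]
  -- L'Hopital level 1
  have hg2d : ∀ x : ℝ, HasDerivAt (fun r : ℝ => 3 * r ^ 2) (6 * x) x := fun x => by
    have := (hasDerivAt_pow 2 x).const_mul (3:ℝ)
    refine this.congr_deriv ?_
    norm_num; ring
  have L1 : Tendsto (fun r => (y2 r - E) / (3 * r ^ 2)) (𝓝[>] (0:ℝ)) (𝓝 (E ^ 2 / 8)) := by
    apply deriv.lhopital_zero_nhdsGT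
    · filter_upwards [hUnhdsR] with x hx
      exact ((hd2 x hx).sub_const E).differentiableAt
    · filter_upwards [hIooR] with x hx
      rw [(hg2d x).deriv]
      have : (0:ℝ) < x := hx.1
      positivity
    · have hc : ContinuousAt (fun r => y2 r - E) 0 :=
        ((hd2 0 h0U).continuousAt).sub continuousAt_const
      have := hc.tendsto.mono_left (nhdsWithin_le_nhds : 𝓝[>] (0:ℝ) ≤ 𝓝 0)
      simpa [h2] using this
    · have hc : ContinuousAt (fun r : ℝ => 3 * r ^ 2) 0 := by fun_prop
      have := hc.tendsto.mono_left (nhdsWithin_le_nhds : 𝓝[>] (0:ℝ) ≤ 𝓝 0)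
      simpa using this
    · refine L2.congr' ?_
      filter_upwards [hUnhdsR] with x hxU
      rw [((hd2 x hxU).sub_const E).deriv, (hg2d x).deriv]
  -- L'Hopital level 0
  have LQ : Tendsto (fun r => (y1 r - E * r) / r ^ 3) (𝓝[>] (0:ℝ)) (𝓝 (E ^ 2 / 8)) := by
    apply deriv.lhopital_zero_nhdsGT
    · filter_upwards [hUnhdsR] with x hx
      exact ((hd1 x hx).sub ((hasDerivAt_id x).const_mul E)).differentiableAt
    · filter_upwards [hIooR] with x hx
      rw [deriv_pow_field]
      have : (0:ℝ) < x := hx.1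
      positivity
    · have hc : ContinuousAt (fun r => y1 r - E * r) 0 :=
        ((hd1 0 h0U).continuousAt).sub (continuousAt_const.mul continuousAt_id)
      have := hc.tendsto.mono_left (nhdsWithin_le_nhds : 𝓝[>] (0:ℝ) ≤ 𝓝 0)
      simpa [h1] using this
    · have hc : ContinuousAt (fun r : ℝ => r ^ 3) 0 := (continuous_pow 3).continuousAt
      have := hc.tendsto.mono_left (nhdsWithin_le_nhds : 𝓝[>] (0:ℝ) ≤ 𝓝 0)
      simpa using this
    · refine L1.congr' ?_
      filter_upwards [hUnhdsR] with x hxU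
      have hfd : HasDerivAt (fun x => y1 x - E * x) (y2 x - E * 1) x :=
        (hd1 x hxU).sub ((hasDerivAt_id x).const_mul E)
      rw [hfd.deriv, deriv_pow_field]
      norm_num
  -- limit of exp (y r)
  have hyc : Tendsto (fun r => Real.exp (y r)) (𝓝[>] (0:ℝ)) (𝓝 (E ^ 2)) := by
    have hc : ContinuousAt (fun r => Real.exp (y r)) 0 :=
      Real.continuous_exp.continuousAt.comp (hd0 0 h0U).continuousAt
    have := hc.tendsto.mono_left (nhdsWithin_le_nhds : 𝓝[>] (0:ℝ) ≤ 𝓝 0)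
    simpa [hE2] using this
  have LYA : Tendsto (fun r => (Real.exp (y r) - E ^ 2) / r ^ 2) (𝓝[>] (0:ℝ))
      (𝓝 (E ^ 3 / 2)) := by
    apply deriv.lhopital_zero_nhdsGT
    · filter_upwards [hUnhdsR] with x hx
      exact ((hd0 x hx).exp.sub_const _).differentiableAt
    · filter_upwards [hIooR] with x hx
      rw [deriv_pow_field]
      have : (0:ℝ) < x := hx.1
      positivity
    · have h := hyc.sub_const (E ^ 2)
      rw [sub_self] at h
      exact h
    · have hc : ContinuousAt (fun r : ℝ => r ^ 2) 0 := (continuous_pow 2).continuousAt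
      have := hc.tendsto.mono_left (nhdsWithin_le_nhds : 𝓝[>] (0:ℝ) ≤ 𝓝 0)
      simpa using this
    · have base := (LP.mul hyc).div_const 2
      rw [show E * E ^ 2 / 2 = E ^ 3 / 2 from by ring] at base
      refine base.congr' ?_
      filter_upwards [hUnhdsR, hIooR] with x hxU hx
      rw [((hd0 x hxU).exp.sub_const _).deriv, deriv_pow_field]
      have hx0 : x ≠ 0 := ne_of_gt hx.1
      field_simp
      ring
  -- combined limit for (exp(y) - P^2)/r^2
  have QL : Tendsto (fun r => (Real.exp (y r) - (y1 r / r) ^ 2) / r ^ 2) (𝓝[>] (0:ℝ))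
      (𝓝 (E ^ 3 / 4)) := by
    have comb := LYA.sub (LQ.mul (LP.add_const E))
    rw [show E ^ 3 / 2 - E ^ 2 / 8 * (E + E) = E ^ 3 / 4 from by ring] at comb
    refine comb.congr' ?_
    filter_upwards [hIooR] with r hr
    have hr0 : r ≠ 0 := ne_of_gt hr.1
    field_simp
    ring
  -- final assembly
  have W : Tendsto (fun r => Real.exp (y r) ^ 2 + Real.exp (y r) * (y1 r / r) ^ 2 + (y1 r / r) ^ 4)
      (𝓝[>] (0:ℝ)) (𝓝 ((E ^ 2) ^ 2 + E ^ 2 * E ^ 2 + E ^ 4)) :=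
    ((hyc.pow 2).add (hyc.mul (LP.pow 2))).add (LP.pow 4)
  have main := (QL.pow 2).mul W
  rw [show (E ^ 3 / 4) ^ 2 * ((E ^ 2) ^ 2 + E ^ 2 * E ^ 2 + E ^ 4) = 3 / 16 * E ^ 10
    from by ring] at main
  have hE10 : E ^ 10 = Real.exp (5 * y 0) := by
    rw [hE, ← Real.exp_nat_mul]
    congr 1
    push_cast
    ring
  rw [hE10] at main
  refine main.congr' ?_
  filter_upwards [hIooR] with r hr
  have hr0 : r ≠ 0 := ne_of_gt hr.1
  have e4 : Real.exp (4 * y r) = Real.exp (y r) ^ 4 := by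
    rw [← Real.exp_nat_mul]
    congr 1
  have e3 : Real.exp (3 * y r) = Real.exp (y r) ^ 3 := by
    rw [← Real.exp_nat_mul]
    congr 1
  rw [e4, e3]
  field_simp
  ring
end

section
/- Define K(r) for a solution y of the n = 2 Calabi ODE by K = 2·[2 − 8re^y/y'³ + y'⁴/(r⁴e^{2y}) + 4/(ry') + 12r²e^{2y}/y'⁶ − 2y'/(r³e^y) − 12e^y/y'⁴ + 6y'³/(r⁵e^{2y}) − 12/(r⁴e^y) + 12y'²/(r⁶e^{2y})]. If y solves the Cauchy problem with y'(0) = 0, y''(0) = e^{y(0)/2}, then K(r) → 3/2 as r → 0⁺. -/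
open Real Set Filter Topology

set_option maxHeartbeats 1000000

theorem calabi_curvature_norm_limit_at_zero
    (ε : ℝ) (hε : 0 < ε) (y : ℝ → ℝ)
    (hsmooth : ContDiffOn ℝ (⊤ : ℕ∞) y (Ioo (-ε) ε))
    (hode : ∀ r ∈ Ioo (0:ℝ) ε,
      (deriv y r / r) * deriv (deriv y) r = Real.exp (y r))
    (h1 : deriv y 0 = 0)
    (h2 : deriv (deriv y) 0 = Real.exp (y 0 / 2))



 :
    Tendsto (fun r =>
        2 * (2 - 8 * r * Real.exp (y r) / (deriv y r) ^ 3
          + (deriv y r) ^ 4 / (r ^ 4 * Real.exp (2 * y r))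
          + 4 / (r * deriv y r)
          + 12 * r ^ 2 * Real.exp (2 * y r) / (deriv y r) ^ 6
          - 2 * deriv y r / (r ^ 3 * Real.exp (y r))
          - 12 * Real.exp (y r) / (deriv y r) ^ 4
          + 6 * (deriv y r) ^ 3 / (r ^ 5 * Real.exp (2 * y r))
          - 12 / (r ^ 4 * Real.exp (y r))
          + 12 * (deriv y r) ^ 2 / (r ^ 6 * Real.exp (2 * y r))))
      (𝓝[>] 0) (𝓝 (3 / 2)) := by
  have hso : IsOpen (Ioo (-ε) ε) := isOpen_Ioo
  have h0s : (0:ℝ) ∈ Ioo (-ε) ε := ⟨by linarith, hε⟩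
  set a : ℝ := Real.exp (y 0 / 2) with ha_def
  have ha : 0 < a := Real.exp_pos _
  have hIoo : Ioo (0:ℝ) ε ⊆ Ioo (-ε) ε := fun r hr => ⟨by linarith [hr.1], hr.2⟩
  -- smoothness consequences
  have hy1 : ContDiffOn ℝ (⊤ : ℕ∞) (deriv y) (Ioo (-ε) ε) :=
    hsmooth.deriv_of_isOpen hso (by simp)
  have hy2 : ContDiffOn ℝ (⊤ : ℕ∞) (deriv (deriv y)) (Ioo (-ε) ε) :=
    hy1.deriv_of_isOpen hso (by simp)
  have hyc : ContinuousAt y 0 := hsmooth.continuousOn.continuousAt (hso.mem_nhds h0s)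
  have hpc : ContinuousAt (deriv y) 0 := hy1.continuousOn.continuousAt (hso.mem_nhds h0s)
  have hqc : ContinuousAt (deriv (deriv y)) 0 := hy2.continuousOn.continuousAt (hso.mem_nhds h0s)
  have hyd : ∀ r ∈ Ioo (-ε) ε, HasDerivAt y (deriv y r) r := fun r hr =>
    ((hsmooth.differentiableOn (by simp)).differentiableAt (hso.mem_nhds hr)).hasDerivAt
  have hpd : ∀ r ∈ Ioo (-ε) ε, HasDerivAt (deriv y) (deriv (deriv y) r) r := fun r hr =>
    ((hy1.differentiableOn (by simp)).differentiableAt (hso.mem_nhds hr)).hasDerivAt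
  -- ODE in product form
  have pode : ∀ r ∈ Ioo (0:ℝ) ε,
      deriv y r * deriv (deriv y) r = r * Real.exp (y r) := by
    intro r hr
    have h := hode r hr
    have hr0 : r ≠ 0 := ne_of_gt hr.1
    field_simp at h
    linarith [h]
  -- P := deriv y r / r → a
  have hP : Tendsto (fun r => deriv y r / r) (𝓝[>] (0:ℝ)) (𝓝 a) := by
    have hp0 : HasDerivAt (deriv y) a 0 := by
      have := hpd 0 h0s; rwa [h2] at this
    have hslope := (hasDerivAt_iff_tendsto_slope.mp hp0).mono_left
      (nhdsWithin_mono _ (fun x (hx : x ∈ Ioi (0:ℝ)) => ne_of_gt hx))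
    refine hslope.congr' ?_
    filter_upwards [self_mem_nhdsWithin] with r hr
    simp [slope_def_field, h1]
  -- q → a
  have hq : Tendsto (fun r => deriv (deriv y) r) (𝓝[>] (0:ℝ)) (𝓝 a) := by
    have := hqc.tendsto.mono_left (nhdsWithin_le_nhds (s := Ioi (0:ℝ)))
    rwa [h2] at this
  -- exp ∘ y → a^2
  have hea : Real.exp (y 0) = a ^ 2 := by
    rw [ha_def, sq, ← Real.exp_add]; ring_nf
  have he : Tendsto (fun r => Real.exp (y r)) (𝓝[>] (0:ℝ)) (𝓝 (a ^ 2)) := by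
    have := (Real.continuous_exp.continuousAt.comp hyc).tendsto.mono_left
      (nhdsWithin_le_nhds (s := Ioi (0:ℝ)))
    rwa [Function.comp, hea] at this
  -- eventual positivity
  have hrpos : ∀ᶠ r in 𝓝[>] (0:ℝ), 0 < r := self_mem_nhdsWithin
  have hpev : ∀ᶠ r in 𝓝[>] (0:ℝ), 0 < deriv y r := by
    filter_upwards [hP.eventually (eventually_gt_nhds ha), hrpos] with r h hr
    have h' : 0 < deriv y r / r * r := mul_pos h hr
    rwa [div_mul_cancel₀ _ (ne_of_gt hr)] at h'
  have hqev : ∀ᶠ r in 𝓝[>] (0:ℝ), 0 < deriv (deriv y) r :=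
    hq.eventually (eventually_gt_nhds ha)
  -- g := r^2 e^y - p^2, derivative r^2 e^y p on (0, ε)
  have hg' : ∀ r ∈ Ioo (0:ℝ) ε,
      HasDerivAt (fun t => t ^ 2 * Real.exp (y t) - (deriv y t) ^ 2)
        (r ^ 2 * Real.exp (y r) * deriv y r) r := by
    intro r hr
    have hrs : r ∈ Ioo (-ε) ε := hIoo hr
    have hexp : HasDerivAt (fun t => Real.exp (y t)) (Real.exp (y r) * deriv y r) r :=
      (hyd r hrs).exp
    have hsq : HasDerivAt (fun t : ℝ => t ^ 2) (2 * r) r := by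
      simpa using hasDerivAt_pow 2 r
    have hp2 : HasDerivAt (fun t => (deriv y t) ^ 2)
        (2 * deriv y r * deriv (deriv y) r) r := by
      have := (hpd r hrs).fun_pow 2
      simpa [mul_assoc] using this
    have hfull := (hsq.mul hexp).sub hp2
    refine hfull.congr_deriv ?_
    have hodeq := pode r hr
    linear_combination (-2) * hodeq
  have hgc : Tendsto (fun r => r ^ 2 * Real.exp (y r) - (deriv y r) ^ 2)
      (𝓝[>] (0:ℝ)) (𝓝 0) := by
    have hc : ContinuousAt (fun r => r ^ 2 * Real.exp (y r) - (deriv y r) ^ 2) 0 :=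
      ((continuousAt_id.pow 2).mul (Real.continuous_exp.continuousAt.comp hyc)).sub (hpc.pow 2)
    have := hc.tendsto.mono_left (nhdsWithin_le_nhds (s := Ioi (0:ℝ)))
    simpa [h1] using this
  have hr4 : Tendsto (fun r : ℝ => r ^ 4) (𝓝[>] (0:ℝ)) (𝓝 0) := by
    have := ((continuous_pow 4).tendsto (0:ℝ)).mono_left (nhdsWithin_le_nhds (s := Ioi (0:ℝ)))
    simpa using this
  have hdiv : Tendsto (fun r => r ^ 2 * Real.exp (y r) * deriv y r / (4 * r ^ 3))
      (𝓝[>] (0:ℝ)) (𝓝 (a ^ 3 / 4)) := by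
    have hbase : Tendsto (fun r => Real.exp (y r) * (deriv y r / r) / 4)
        (𝓝[>] (0:ℝ)) (𝓝 (a ^ 2 * a / 4)) := (he.mul hP).div_const 4
    have hval : a ^ 2 * a / 4 = a ^ 3 / 4 := by ring
    rw [hval] at hbase
    refine hbase.congr' ?_
    filter_upwards [hrpos] with r hr
    have hr0 : r ≠ 0 := ne_of_gt hr
    field_simp
  have hg4 : Tendsto (fun r => (r ^ 2 * Real.exp (y r) - (deriv y r) ^ 2) / r ^ 4)
      (𝓝[>] (0:ℝ)) (𝓝 (a ^ 3 / 4)) := by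
    refine HasDerivAt.lhopital_zero_right_on_Ioo hε hg'
      (fun x _ => by simpa using hasDerivAt_pow 4 x)
      (fun x hx => by
        have := hx.1
        positivity) hgc hr4 hdiv
  -- W → a^2/4
  have hW : Tendsto (fun r => (deriv (deriv y) r - deriv y r / r) / r ^ 2)
      (𝓝[>] (0:ℝ)) (𝓝 (a ^ 2 / 4)) := by
    have hmain := hg4.mul (hP.inv₀ (ne_of_gt ha))
    have hval : a ^ 3 / 4 * a⁻¹ = a ^ 2 / 4 := by field_simp
    rw [hval] at hmain
    refine hmain.congr' ?_
    filter_upwards [Ioo_mem_nhdsGT_of_mem (⟨le_refl 0, hε⟩ : (0:ℝ) ∈ Ico 0 ε), hpev]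
      with r hr hp
    have hr0 : r ≠ 0 := ne_of_gt hr.1
    have hp0 : deriv y r ≠ 0 := ne_of_gt hp
    have hodeq := pode r hr
    field_simp
    linear_combination (-r) * hodeq
  -- main limit via continuity of rational function
  set L : ℝ × ℝ × ℝ × ℝ → ℝ := fun v =>
    2 * (v.2.1 ^ 6 + 2 * v.2.1 ^ 4 * v.2.2.1 ^ 2 - 18 * v.2.1 ^ 4 * v.2.2.2
      - 20 * v.2.1 ^ 3 * v.2.2.2 ^ 2 * v.1 ^ 2 - 8 * v.2.1 ^ 2 * v.2.2.2 ^ 3 * v.1 ^ 4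
      + 12 * v.2.2.2 ^ 2 * (v.2.2.1 ^ 2 + v.2.1 * v.2.2.1 + v.2.1 ^ 2))
      / (v.2.1 ^ 4 * v.2.2.1 ^ 2) with hL_def
  have hLcont : ContinuousAt L (0, a, a, a ^ 2 / 4) := by
    apply ContinuousAt.div
    · fun_prop
    · fun_prop
    · simp only
      positivity
  have hrt : Tendsto (fun r : ℝ => r) (𝓝[>] (0:ℝ)) (𝓝 0) :=
    tendsto_id.mono_left nhdsWithin_le_nhds
  have htuple : Tendsto (fun r => (r, deriv y r / r, deriv (deriv y) r,
      (deriv (deriv y) r - deriv y r / r) / r ^ 2)) (𝓝[>] (0:ℝ))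
      (𝓝 (0, a, a, a ^ 2 / 4)) :=
    hrt.prodMk_nhds (hP.prodMk_nhds (hq.prodMk_nhds hW))
  have hcomp := hLcont.tendsto.comp htuple
  have hLval : L (0, a, a, a ^ 2 / 4) = 3 / 2 := by
    simp only [hL_def]
    rw [div_eq_iff (by positivity)]
    ring
  rw [hLval] at hcomp
  refine hcomp.congr' ?_
  filter_upwards [Ioo_mem_nhdsGT_of_mem (⟨le_refl 0, hε⟩ : (0:ℝ) ∈ Ico 0 ε), hpev, hqev]
    with r hr hp hqr
  have hr0 : r ≠ 0 := ne_of_gt hr.1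
  have hp0 : deriv y r ≠ 0 := ne_of_gt hp
  have hq0 : deriv (deriv y) r ≠ 0 := ne_of_gt hqr
  have he0 : Real.exp (y r) ≠ 0 := (Real.exp_pos _).ne'
  have hodeq := pode r hr
  have hexp2 : Real.exp (2 * y r) = Real.exp (y r) ^ 2 := by
    rw [sq, ← Real.exp_add]; ring_nf
  have hee : Real.exp (y r) = deriv y r * deriv (deriv y) r / r := by
    rw [hodeq]; field_simp
  simp only [Function.comp, hL_def]
  rw [hexp2, hee]
  field_simp
  ring
end

section
/- With K(r) as above (the curvature norm |R|² of Calabi's metric for n = 2), if y → +∞, y' → +∞ and e^y/y'³ → 1/(3a) as r → a⁻, then K(r) → 4/3 as r → a⁻. -/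
/-!
Put `A = e^y / y'³` and `v = 1 / y'`. Substituting `e^y = A y'³` turns every term of `K` either
into a polynomial in `r` and `A`, or into a multiple of `v` whose cofactor stays bounded as long as
`r` and `A` stay away from `0`. Since `v → 0`, `r → a` and `A → 1/(3a)`, continuity gives
`K → 2 (2 - 8/3 + 4/3) = 4/3`.
-/

open Real Set Filter Topology

noncomputable def calabiCurvatureNorm (r Y Y' : ℝ) : ℝ :=
  2 * (2 - 8 * r * Real.exp Y / Y' ^ 3
    + Y' ^ 4 / (r ^ 4 * Real.exp (2 * Y))
    + 4 / (r * Y')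
    + 12 * r ^ 2 * Real.exp (2 * Y) / Y' ^ 6
    - 2 * Y' / (r ^ 3 * Real.exp Y)
    - 12 * Real.exp Y / Y' ^ 4
    + 6 * Y' ^ 3 / (r ^ 5 * Real.exp (2 * Y))
    - 12 / (r ^ 4 * Real.exp Y)
    + 12 * Y' ^ 2 / (r ^ 6 * Real.exp (2 * Y)))

noncomputable def calabiCurvatureNormReduced (r A v : ℝ) : ℝ :=
  2 * (2 - 8 * r * A + 12 * r ^ 2 * A ^ 2
    + v * (4 / r - 12 * A + v / (r ^ 4 * A ^ 2) - 2 * v / (r ^ 3 * A)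
      + 6 * v ^ 2 / (r ^ 5 * A ^ 2) - 12 * v ^ 2 / (r ^ 4 * A) + 12 * v ^ 3 / (r ^ 6 * A ^ 2)))

theorem calabiCurvatureNorm_eq_reduced {r Y' : ℝ} (Y : ℝ) (hr : r ≠ 0) (hY' : Y' ≠ 0) :
    calabiCurvatureNorm r Y Y' = calabiCurvatureNormReduced r (Real.exp Y / Y' ^ 3) Y'⁻¹ := by
  rw [calabiCurvatureNorm, calabiCurvatureNormReduced, two_mul Y, Real.exp_add]
  field_simp
  ring

theorem continuousAt_calabiCurvatureNormReduced {r A : ℝ} (hr : r ≠ 0) (hA : A ≠ 0) (v : ℝ) :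
    ContinuousAt (fun p : ℝ × ℝ × ℝ => calabiCurvatureNormReduced p.1 p.2.1 p.2.2) (r, A, v) := by
  unfold calabiCurvatureNormReduced
  fun_prop (disch := simp [*])

theorem calabiCurvatureNormReduced_zero (r A : ℝ) :
    calabiCurvatureNormReduced r A 0 = 2 * (2 - 8 * r * A + 12 * r ^ 2 * A ^ 2) := by
  simp [calabiCurvatureNormReduced]

theorem calabi_curvature_norm_limit_at_a_general
    (a : ℝ) (ha : 0 < a) (y y' : ℝ → ℝ)
    (hy'_top : Tendsto y' (𝓝[<] a) atTop)
    (hlim : Tendsto (fun r => Real.exp (y r) / (y' r) ^ 3) (𝓝[<] a) (𝓝 (1 / (3 * a)))) :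
    Tendsto (fun r =>
        2 * (2 - 8 * r * Real.exp (y r) / (y' r) ^ 3
          + (y' r) ^ 4 / (r ^ 4 * Real.exp (2 * y r))
          + 4 / (r * y' r)
          + 12 * r ^ 2 * Real.exp (2 * y r) / (y' r) ^ 6
          - 2 * y' r / (r ^ 3 * Real.exp (y r))
          - 12 * Real.exp (y r) / (y' r) ^ 4
          + 6 * (y' r) ^ 3 / (r ^ 5 * Real.exp (2 * y r))
          - 12 / (r ^ 4 * Real.exp (y r))
          + 12 * (y' r) ^ 2 / (r ^ 6 * Real.exp (2 * y r))))
      (𝓝[<] a) (𝓝 (4 / 3)) := by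
  have hr : Tendsto id (𝓝[<] a) (𝓝 a) := nhdsWithin_le_nhds
  have hreduced :=
    (continuousAt_calabiCurvatureNormReduced (A := 1 / (3 * a)) ha.ne' (by positivity) 0).tendsto.comp
      (hr.prodMk_nhds (hlim.prodMk_nhds hy'_top.inv_tendsto_atTop))
  have hvalue : calabiCurvatureNormReduced a (1 / (3 * a)) 0 = 4 / 3 := by
    rw [calabiCurvatureNormReduced_zero]
    field_simp
    ring
  rw [hvalue] at hreduced
  refine hreduced.congr' ?_
  filter_upwards [hr.eventually_ne ha.ne', hy'_top.eventually_ne_atTop 0] with r hr0 hy'0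
  exact (calabiCurvatureNorm_eq_reduced (y r) hr0 hy'0).symm

theorem calabi_curvature_norm_limit_at_a
    (a : ℝ) (ha : 0 < a) (y y' y'' : ℝ → ℝ)
    (hy' : ∀ r ∈ Ioo (0:ℝ) a, HasDerivAt y (y' r) r)
    (hy'' : ∀ r ∈ Ioo (0:ℝ) a, HasDerivAt y' (y'' r) r)
    (hy'pos : ∀ r ∈ Ioo (0:ℝ) a, 0 < y' r)
    (hode : ∀ r ∈ Ioo (0:ℝ) a, y'' r = r * Real.exp (y r) / y' r)
    (hy_top : Tendsto y (𝓝[<] a) atTop)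
    (hy'_top : Tendsto y' (𝓝[<] a) atTop)
    (hlim : Tendsto (fun r => Real.exp (y r) / (y' r) ^ 3) (𝓝[<] a) (𝓝 (1 / (3 * a)))) :
    Tendsto (fun r =>
        2 * (2 - 8 * r * Real.exp (y r) / (y' r) ^ 3
          + (y' r) ^ 4 / (r ^ 4 * Real.exp (2 * y r))
          + 4 / (r * y' r)
          + 12 * r ^ 2 * Real.exp (2 * y r) / (y' r) ^ 6
          - 2 * y' r / (r ^ 3 * Real.exp (y r))
          - 12 * Real.exp (y r) / (y' r) ^ 4
          + 6 * (y' r) ^ 3 / (r ^ 5 * Real.exp (2 * y r))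
          - 12 / (r ^ 4 * Real.exp (y r))
          + 12 * (y' r) ^ 2 / (r ^ 6 * Real.exp (2 * y r))))
      (𝓝[<] a) (𝓝 (4 / 3)) :=
  calabi_curvature_norm_limit_at_a_general a ha y y' hy'_top hlim
end

section
/- Let n ≥ 3, λ ∈ ℝ, and let ρ : M → ℝ be a nonnegative continuous function on a measure space (M, μ) with μ(M) > 0. If the function a₃ = (1/48)(Δh − λ(n−2)(λ²n(n−2) + ρ)) is identically zero for some function h with ∫_M Δh dμ = 0, then λ = 0. -/
open Real MeasureTheory

section

variable {α : Type*} [MeasurableSpace α] {μ : Measure α}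

theorem integral_pos_of_forall_pos {f : α → ℝ} (hf : ∀ x, 0 < f x) (hfi : Integrable f μ)
    (hμ : 0 < μ Set.univ) : 0 < ∫ x, f x ∂μ := by
  have hsupp : Function.support f = Set.univ :=
    Set.eq_univ_of_forall fun x => (hf x).ne'
  rw [integral_pos_iff_support_of_nonneg (fun x => (hf x).le) hfi, hsupp]
  exact hμ

theorem eq_zero_of_integral_const_mul_eq_zero {f : α → ℝ} {c : ℝ} (hf : ∀ x, 0 < f x)
    (hμ : 0 < μ Set.univ) (hcf : Integrable (fun x => c * f x) μ)
    (h : ∫ x, c * f x ∂μ = 0) : c = 0 := by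
  by_contra hc
  have hfi : Integrable f μ := (integrable_const_mul_iff (Ne.isUnit hc) f).mp hcf
  rw [integral_const_mul] at h
  exact (integral_pos_of_forall_pos hf hfi hμ).ne' ((mul_eq_zero.mp h).resolve_left hc)

end

theorem a3_vanishing_implies_ricci_flat_general
    {M : Type*} [MeasurableSpace M]
    (μ : Measure M) (hμ : 0 < μ Set.univ)
    (n : ℕ) (hn : 3 ≤ n) (lam : ℝ)
    (ρ : M → ℝ) (hρnonneg : ∀ x, 0 ≤ ρ x)
    (Δh : M → ℝ) (hΔh_int : Integrable Δh μ) (hΔh : ∫ x, Δh x ∂μ = 0)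
    (ha3 : ∀ x : M,
      (1 / 48) * (Δh x - lam * (n - 2) * (lam ^ 2 * n * (n - 2) + ρ x)) = 0) :
    lam = 0 := by
  have hn2 : (0 : ℝ) < n - 2 := by
    have : (3 : ℝ) ≤ n := by exact_mod_cast hn
    linarith
  have hΔh_eq : Δh = fun x => lam * (n - 2) * (lam ^ 2 * n * (n - 2) + ρ x) := by
    funext x
    linarith [ha3 x]
  by_contra hlam
  have hf_pos : ∀ x, 0 < lam ^ 2 * n * (n - 2) + ρ x := fun x => by
    have : 0 < lam ^ 2 * n * ((n : ℝ) - 2) := by positivity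
    linarith [hρnonneg x]
  rw [hΔh_eq] at hΔh_int hΔh
  have hc := eq_zero_of_integral_const_mul_eq_zero hf_pos hμ hΔh_int hΔh
  exact mul_ne_zero hlam hn2.ne' hc

/-- Abstract version of Theorem 1(2): if `n ≥ 3`, `ρ ≥ 0` is continuous, and
`a₃ = (1/48)(Δh − λ(n−2)(λ²n(n−2) + ρ))` vanishes identically, where `Δh` is an
integrable function with `∫ Δh = 0`, on a space of positive measure, then `λ = 0`. -/
theorem a3_vanishing_implies_ricci_flat
    {M : Type*} [TopologicalSpace M] [MeasurableSpace M] [OpensMeasurableSpace M]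
    (μ : Measure M) (hμ : 0 < μ Set.univ)
    (n : ℕ) (hn : 3 ≤ n) (lam : ℝ)
    (ρ : M → ℝ) (hρcont : Continuous ρ) (hρnonneg : ∀ x, 0 ≤ ρ x)
    (Δh : M → ℝ) (hΔh_int : Integrable Δh μ) (hΔh : ∫ x, Δh x ∂μ = 0)
    (ha3 : ∀ x : M,
      (1 / 48) * (Δh x - lam * (n - 2) * (lam ^ 2 * n * (n - 2) + ρ x)) = 0) :
    lam = 0 :=
  a3_vanishing_implies_ricci_flat_general μ hμ n hn lam ρ hρnonneg Δh hΔh_int hΔh ha3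
end
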